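/- arXiv:2004.08637 — 4 statements merged into one kernel-verified Lean document; each statement's English description precedes it below -/
import Mathlib

section
/- Let k < n be positive integers, let B be a set of colours with |B| ≥ n, let G be a graph with vertex set {1, …, n}, and let ψ : E(G) → B be an edge-colouring. Suppose that for every pair of disjoint vertex sets X, Y ⊆ V(G) with |X| = |Y| = k, the number of distinct colours appearing on the edges of G with one endpoint in X and the other in Y is at least n. Then G contains a path of length at least n − 2k (i.e., with at least n − 2k edges) whose edges receive pairwise distinct colours under ψ. -/
open Finset SimpleGraph

/-- The set of edges of `G` with one endpoint in `X` and the other in `Y`. -/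
def betweenEdges {n : ℕ} (G : SimpleGraph (Fin n)) (X Y : Finset (Fin n)) :
    Set (Sym2 (Fin n)) :=
  {e | e ∈ G.edgeSet ∧ ∃ x ∈ X, ∃ y ∈ Y, e = s(x, y)}

/-- Rainbow DFS: from any valid state we can reach a state where `k` vertices have been
discarded, with all edges from the discarded set to the unexplored set coloured from a
small colour set. -/
lemma rainbow_dfs {n k : ℕ} (hk : 0 < k) (h2k : 2*k < n)
    (G : SimpleGraph (Fin n)) (ψ : Sym2 (Fin n) → ℕ)
    (hlong : ∀ (u v : Fin n) (p : G.Walk u v), p.IsPath → (p.edges.map ψ).Nodup →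
      p.length < n - 2*k) :
    ∀ (m : ℕ) (u v : Fin n) (p : G.Walk u v) (U : Finset (Fin n)) (C : Finset ℕ),
    (Finset.univ \ (U ∪ p.support.toFinset)).card * (n+2) + p.support.length ≤ m →
    p.IsPath → (p.edges.map ψ).Nodup → (∀ e ∈ p.edges, ψ e ∈ C) →
    (∀ x ∈ U, x ∉ p.support) →
    (∀ x ∈ U, ∀ w : Fin n, w ∉ U → w ∉ p.support → G.Adj x w → ψ s(x, w) ∈ C) →
    C.card + 1 ≤ U.card + p.support.length →
    U.card ≤ k →
    ∃ (U' : Finset (Fin n)) (C' : Finset ℕ) (W' : Finset (Fin n)),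
      U'.card = k ∧ C'.card < n ∧ k ≤ W'.card ∧ Disjoint U' W' ∧
      ∀ x ∈ U', ∀ w ∈ W', G.Adj x w → ψ s(x, w) ∈ C' := by
  intro m
  induction m with
  | zero =>
    intro u v p U C hm _ _ _ _ _ _ _
    exfalso
    have h1 : p.support.length = p.length + 1 := SimpleGraph.Walk.length_support p
    omega
  | succ m ih =>
    intro u v p U C hm hpath hrain hCedge hdisj hI2 hcard hUk
    have hsupl : p.support.length = p.length + 1 := SimpleGraph.Walk.length_support p
    have hplen : p.length < n - 2*k := hlong u v p hpath hrain
    by_cases hU : U.card = k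
    · -- finished: extract the final state
      refine ⟨U, C, Finset.univ \ (U ∪ p.support.toFinset), hU, by omega, ?_, ?_, ?_⟩
      · -- k ≤ W'.card
        have hsub : U ∪ p.support.toFinset ⊆ Finset.univ := Finset.subset_univ _
        have h1 : (Finset.univ \ (U ∪ p.support.toFinset)).card =
            n - (U ∪ p.support.toFinset).card := by
          rw [Finset.card_sdiff_of_subset hsub]
          simp
        have h2 : (U ∪ p.support.toFinset).card ≤ U.card + p.support.toFinset.card :=
          Finset.card_union_le _ _
        have h3 : p.support.toFinset.card ≤ p.support.length := p.support.toFinset_card_le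
        omega
      · -- Disjoint
        rw [Finset.disjoint_left]
        intro a haU ha
        simp only [Finset.mem_sdiff, Finset.mem_union] at ha
        exact ha.2 (Or.inl haU)
      · intro x hx w hw hadj
        simp only [Finset.mem_sdiff, Finset.mem_union] at hw
        push_neg at hw
        exact hI2 x hx w hw.2.1 (fun hc => hw.2.2 (List.mem_toFinset.mpr hc)) hadj
    · have hUlt : U.card < k := lt_of_le_of_ne hUk hU
      by_cases hext : ∃ w : Fin n, w ∉ U ∧ w ∉ p.support ∧ G.Adj w u ∧ ψ s(w, u) ∉ C
      · -- extend the path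
        obtain ⟨w, hwU, hwsupp, hadj, hcol⟩ := hext
        have hwmem : w ∈ Finset.univ \ (U ∪ p.support.toFinset) := by
          simp only [Finset.mem_sdiff, Finset.mem_union, Finset.mem_univ, true_and]
          push_neg
          exact ⟨hwU, fun hc => hwsupp (List.mem_toFinset.mp hc)⟩
        have hset : Finset.univ \ (U ∪ (SimpleGraph.Walk.cons hadj p).support.toFinset) =
            (Finset.univ \ (U ∪ p.support.toFinset)).erase w := by
          ext a
          simp only [SimpleGraph.Walk.support_cons, List.toFinset_cons, Finset.mem_sdiff,
            Finset.mem_union, Finset.mem_univ, true_and, Finset.mem_erase, Finset.mem_insert]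
          tauto
        have hcarderase : ((Finset.univ \ (U ∪ p.support.toFinset)).erase w).card + 1 =
            (Finset.univ \ (U ∪ p.support.toFinset)).card :=
          Finset.card_erase_add_one hwmem
        have hmul : ((Finset.univ \ (U ∪ p.support.toFinset)).erase w).card * (n+2) + (n+2) =
            (Finset.univ \ (U ∪ p.support.toFinset)).card * (n+2) := by
          rw [← hcarderase, Nat.add_mul, Nat.one_mul]
        apply ih w v (SimpleGraph.Walk.cons hadj p) U (insert (ψ s(w, u)) C)
        · rw [hset]
          have h2 : (SimpleGraph.Walk.cons hadj p).support.length = p.support.length + 1 := by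
            simp [SimpleGraph.Walk.support_cons]
          omega
        · exact SimpleGraph.Walk.cons_isPath_iff hadj p |>.mpr ⟨hpath, hwsupp⟩
        · simp only [SimpleGraph.Walk.edges_cons, List.map_cons, List.nodup_cons]
          refine ⟨fun hc => ?_, hrain⟩
          obtain ⟨e, he, heq⟩ := List.mem_map.mp hc
          exact hcol (heq ▸ hCedge e he)
        · intro e he
          simp only [SimpleGraph.Walk.edges_cons, List.mem_cons] at he
          rcases he with rfl | he
          · exact Finset.mem_insert_self _ _
          · exact Finset.mem_insert_of_mem (hCedge e he)
        · intro x hx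
          simp only [SimpleGraph.Walk.support_cons, List.mem_cons]
          push_neg
          exact ⟨fun hc => hwU (hc ▸ hx), hdisj x hx⟩
        · intro x hx w' hw'U hw's hadj'
          simp only [SimpleGraph.Walk.support_cons, List.mem_cons] at hw's
          push_neg at hw's
          exact Finset.mem_insert_of_mem (hI2 x hx w' hw'U hw's.2 hadj')
        · have := Finset.card_insert_le (ψ s(w, u)) C
          have h2 : (SimpleGraph.Walk.cons hadj p).support.length = p.support.length + 1 := by
            simp [SimpleGraph.Walk.support_cons]
          omega
        · exact hUk
      · -- cannot extend: discard the endpoint u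
        push_neg at hext
        have huU : u ∉ U := fun hc => hdisj u hc p.start_mem_support
        cases p with
        | nil =>
          -- restart with a fresh vertex
          have hWpos : 0 < (Finset.univ \ (insert u U)).card := by
            have hsub : insert u U ⊆ Finset.univ := Finset.subset_univ _
            rw [Finset.card_sdiff_of_subset hsub]
            have := Finset.card_insert_le u U
            simp only [Finset.card_univ, Fintype.card_fin]
            omega
          obtain ⟨w, hw⟩ := Finset.card_pos.mp hWpos
          simp only [Finset.mem_sdiff, Finset.mem_univ, true_and, Finset.mem_insert] at hw
          push_neg at hw
          have hwmem : w ∈ Finset.univ \ (U ∪ (SimpleGraph.Walk.nil : G.Walk u u).support.toFinset) := by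
            simp only [SimpleGraph.Walk.support_nil, List.toFinset_cons, List.toFinset_nil,
              Finset.mem_sdiff, Finset.mem_union, Finset.mem_univ, true_and]
            push_neg
            refine ⟨hw.2, ?_⟩
            simp [hw.1]
          have hset : Finset.univ \ (insert u U ∪
              (SimpleGraph.Walk.nil : G.Walk w w).support.toFinset) =
              (Finset.univ \ (U ∪ (SimpleGraph.Walk.nil : G.Walk u u).support.toFinset)).erase w := by
            ext a
            simp only [SimpleGraph.Walk.support_nil, List.toFinset_cons, List.toFinset_nil,
              Finset.mem_sdiff, Finset.mem_union, Finset.mem_univ, true_and, Finset.mem_erase,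
              Finset.mem_insert]
            tauto
          have hcarderase := Finset.card_erase_add_one hwmem
          have hmul : ((Finset.univ \ (U ∪ (SimpleGraph.Walk.nil : G.Walk u u).support.toFinset)).erase w).card * (n+2) + (n+2) =
              (Finset.univ \ (U ∪ (SimpleGraph.Walk.nil : G.Walk u u).support.toFinset)).card * (n+2) := by
            rw [← hcarderase, Nat.add_mul, Nat.one_mul]
          apply ih w w SimpleGraph.Walk.nil (insert u U) C
          · rw [hset]
            simp only [SimpleGraph.Walk.support_nil, List.length_cons, List.length_nil] at hm hmul ⊢
            omega
          · exact SimpleGraph.Walk.IsPath.nil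
          · simp
          · simp
          · intro x hx
            simp only [SimpleGraph.Walk.support_nil, List.mem_cons, List.not_mem_nil, or_false]
            rcases Finset.mem_insert.mp hx with rfl | hx
            · exact fun hc => hw.1 hc.symm
            · exact fun hc => hw.2 (hc ▸ hx)
          · intro x hx w' hw'U hw's hadj'
            simp only [Finset.mem_insert] at hw'U
            push_neg at hw'U
            rcases Finset.mem_insert.mp hx with rfl | hx
            · have := hext w' hw'U.2 (by simp [hw'U.1]) hadj'.symm
              rwa [Sym2.eq_swap] at this
            · exact hI2 x hx w' hw'U.2 (by simp [hw'U.1]) hadj'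
          · rw [Finset.card_insert_of_notMem huU]
            simp only [SimpleGraph.Walk.support_nil, List.length_cons, List.length_nil] at hcard ⊢
            omega
          · rw [Finset.card_insert_of_notMem huU]; omega
        | cons hadj q =>
          rename_i u₁
          have hpq : q.IsPath := hpath.of_cons
          have hu_not_q : u ∉ q.support := (SimpleGraph.Walk.cons_isPath_iff _ _ |>.mp hpath).2
          have hset : Finset.univ \ (insert u U ∪ q.support.toFinset) =
              Finset.univ \ (U ∪ (SimpleGraph.Walk.cons hadj q).support.toFinset) := by
            ext a
            simp only [SimpleGraph.Walk.support_cons, List.toFinset_cons, Finset.mem_sdiff,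
              Finset.mem_union, Finset.mem_univ, true_and, Finset.mem_insert]
            tauto
          apply ih u₁ v q (insert u U) C
          · rw [hset]
            simp only [SimpleGraph.Walk.support_cons, List.length_cons] at hm ⊢
            omega
          · exact hpq
          · simp only [SimpleGraph.Walk.edges_cons, List.map_cons, List.nodup_cons] at hrain
            exact hrain.2
          · intro e he
            exact hCedge e (by simp [SimpleGraph.Walk.edges_cons, he])
          · intro x hx
            rcases Finset.mem_insert.mp hx with rfl | hx
            · exact hu_not_q
            · intro hc
              exact hdisj x hx (by simp [SimpleGraph.Walk.support_cons, hc])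
          · intro x hx w' hw'U hw's hadj'
            simp only [Finset.mem_insert] at hw'U
            push_neg at hw'U
            have hw'p : w' ∉ (SimpleGraph.Walk.cons hadj q).support := by
              simp only [SimpleGraph.Walk.support_cons, List.mem_cons]
              push_neg
              exact ⟨hw'U.1, hw's⟩
            rcases Finset.mem_insert.mp hx with rfl | hx
            · have := hext w' hw'U.2 hw'p hadj'.symm
              rwa [Sym2.eq_swap] at this
            · exact hI2 x hx w' hw'U.2 hw'p hadj'
          · rw [Finset.card_insert_of_notMem huU]
            simp only [SimpleGraph.Walk.support_cons, List.length_cons] at hcard ⊢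
            omega
          · rw [Finset.card_insert_of_notMem huU]; omega

/-- **Proposition (long rainbow paths via rainbow DFS).**
Let `0 < k < n`, let `B` be a set of at least `n` colours, let `G` be a graph on `Fin n`
and let `ψ` be an edge-colouring of `G` with colours in `B`. If for every pair of disjoint
vertex sets `X, Y` of size `k` the edges between `X` and `Y` carry at least `n` distinct
colours, then `G` has a rainbow path of length at least `n - 2k`. -/
theorem rainbow_path_of_colourful_cuts (n k : ℕ) (hk : 0 < k) (hkn : k < n)
    (B : Finset ℕ) (hB : n ≤ B.card)
    (G : SimpleGraph (Fin n)) (ψ : Sym2 (Fin n) → ℕ)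
    (hψB : ∀ e ∈ G.edgeSet, ψ e ∈ B)
    (hcut : ∀ X Y : Finset (Fin n), Disjoint X Y → X.card = k → Y.card = k →
      n ≤ (ψ '' betweenEdges G X Y).ncard) :
    ∃ (u v : Fin n) (w : G.Walk u v),
      w.IsPath ∧ n - 2 * k ≤ w.length ∧ (w.edges.map ψ).Nodup := by
  have hn : 0 < n := lt_of_le_of_lt (Nat.zero_le k) hkn
  rcases le_or_gt n (2*k) with h2k | h2k
  · -- trivial case: n - 2k = 0
    refine ⟨⟨0, hn⟩, ⟨0, hn⟩, SimpleGraph.Walk.nil, SimpleGraph.Walk.IsPath.nil, by omega, by simp⟩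
  · by_contra hcon
    push_neg at hcon
    have hlong : ∀ (u v : Fin n) (p : G.Walk u v), p.IsPath → (p.edges.map ψ).Nodup →
        p.length < n - 2*k := by
      intro u v p hp hr
      by_contra hlen
      push_neg at hlen
      exact hcon u v p hp hlen hr
    obtain ⟨U', C', W', hU'k, hC'n, hW'k, hdisjUW, hprop⟩ :=
      rainbow_dfs hk h2k G ψ hlong
        ((Finset.univ \ ((∅ : Finset (Fin n)) ∪
          (SimpleGraph.Walk.nil : G.Walk ⟨0, hn⟩ ⟨0, hn⟩).support.toFinset)).card * (n+2) +
          (SimpleGraph.Walk.nil : G.Walk ⟨0, hn⟩ ⟨0, hn⟩).support.length)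
        ⟨0, hn⟩ ⟨0, hn⟩ SimpleGraph.Walk.nil ∅ ∅ le_rfl
        SimpleGraph.Walk.IsPath.nil (by simp) (by simp) (by simp) (by simp)
        (by simp [SimpleGraph.Walk.support_nil]) (Nat.zero_le k)
    obtain ⟨Y, hYW, hYcard⟩ := Finset.exists_subset_card_eq hW'k
    have hdisjXY : Disjoint U' Y := hdisjUW.mono_right hYW
    have hsub : ψ '' betweenEdges G U' Y ⊆ ↑C' := by
      rintro c ⟨e, ⟨heE, x, hx, y, hy, rfl⟩, rfl⟩
      exact hprop x hx y (hYW hy) ((G.mem_edgeSet).mp heE)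
    have hle : (ψ '' betweenEdges G U' Y).ncard ≤ C'.card := by
      have := Set.ncard_le_ncard hsub C'.finite_toSet
      rwa [Set.ncard_coe_finset] at this
    have := hcut U' Y hdisjXY hU'k hYcard
    omega
end

section
/- For all constants α > 0 and ε > 0 there exists a constant K = K(α, ε) such that the following holds. Let G ∼ 𝔾(n, K/n) and let ψ be the random edge-colouring assigning each edge of G a colour chosen independently and uniformly at random from {1, …, ⌈(1+α)·n⌉}. Then asymptotically almost surely G contains a path of length at least (1 − ε)·n whose edges receive pairwise distinct colours under ψ. -/
open MeasureTheory

/-- The graph on `Fin n` determined by an indicator function on pairs: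
the edge `e` is present iff `f e = true` (loops are discarded). -/
def graphOf {n : ℕ} (f : Sym2 (Fin n) → Bool) : SimpleGraph (Fin n) :=
  SimpleGraph.fromEdgeSet {e | f e = true}

/-- The Bernoulli measure on `Bool` with success probability `p`. -/
noncomputable def bernoulliMeasure (p : ℝ) : Measure Bool :=
  ENNReal.ofReal p • Measure.dirac true + ENNReal.ofReal (1 - p) • Measure.dirac false

/-- The distribution of the binomial random graph `𝔾(n,p)`, encoded as the product of
independent Bernoulli(`p`) coordinates, one for each potential edge. -/
noncomputable def graphMeasure (n : ℕ) (p : ℝ) : Measure (Sym2 (Fin n) → Bool) :=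
  Measure.pi fun _ => bernoulliMeasure p

/-- The distribution of a uniformly random colouring of all pairs of vertices of `Fin n`
with colours from `Fin r`: the product of independent uniform colours. -/
noncomputable def colourMeasure (n r : ℕ) : Measure (Sym2 (Fin n) → Fin r) :=
  Measure.pi fun _ => (r : ENNReal)⁻¹ • Measure.count

/-- `G` has a path of length at least `L` whose edges get pairwise distinct colours
under `ψ`. -/
def HasRainbowPath {n : ℕ} {C : Type*} (G : SimpleGraph (Fin n))
    (ψ : Sym2 (Fin n) → C) (L : ℝ) : Prop :=
  ∃ (u v : Fin n) (w : G.Walk u v),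
    w.IsPath ∧ L ≤ (w.length : ℝ) ∧ (w.edges.map ψ).Nodup

/-!
Run a depth-first search that extends the current path only along edges whose colour has not
been used before, and declares a vertex finished once it has no such edge to an unvisited
vertex. Edges between finished and unvisited vertices then carry used colours, and at most `n`
colours are ever used. So if any two disjoint `s`-sets are joined by an edge avoiding any `n`
prescribed colours, then when `s` vertices remain unvisited fewer than `s` are finished, and
the current path, which is rainbow, has length at least `n - 2s`; take `s = ⌊εn/2⌋`.

For fixed `A`, `B`, `C` with `|A| = |B| = s` and `|C| ≤ n`, each of the `s²` pairs between `A`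
and `B` independently fails to be an edge with a colour outside `C` with probability at most
`1 - p(1 - n/r) ≤ exp(-p(1 - n/r))`, where `r = ⌈(1+α)n⌉`. A union bound over the at most
`2^(2n+r)` triples leaves a failure probability of at most `exp(-n)` once `K` is large.
-/

open Finset

namespace SimpleGraph

variable {V κ : Type*} [Fintype V] [DecidableEq V]

def RainbowLinked (G : SimpleGraph V) (ψ : Sym2 V → κ) (s m : ℕ) : Prop :=
  ∀ (A B : Finset V) (C : Finset κ), #A = s → #B = s → Disjoint A B → #C ≤ m →
    ∃ a ∈ A, ∃ b ∈ B, G.Adj a b ∧ ψ s(a, b) ∉ C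

variable (G : SimpleGraph V) (ψ : Sym2 V → κ)

/-- A state of depth-first search for rainbow paths: `S` holds the finished vertices, `T` the
unvisited ones, the path `w` is the stack (with its top at `u`), and `C` holds every colour
used so far. -/
structure IsRainbowDFSState (S T : Finset V) (C : Finset κ) {u v : V} (w : G.Walk u v) :
    Prop where
  disjoint : Disjoint S T
  card_add_card_le : #C + #T ≤ Fintype.card V
  colour_mem : ∀ a ∈ S, ∀ b ∈ T, G.Adj a b → ψ s(a, b) ∈ C
  isPath : w.IsPath
  mem_support_iff : ∀ x, x ∈ w.support ↔ x ∉ S ∧ x ∉ T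
  nodup : (w.edges.map ψ).Nodup
  colour_edges_mem : ∀ e ∈ w.edges, ψ e ∈ C

def HasRainbowDFSState (t : ℕ) : Prop :=
  ∃ (S T : Finset V) (C : Finset κ) (u v : V) (w : G.Walk u v),
    G.IsRainbowDFSState ψ S T C w ∧ #T = t

variable {G ψ}

lemma isRainbowDFSState_start (v : V) :
    G.IsRainbowDFSState ψ ∅ (univ.erase v) ∅ (Walk.nil : G.Walk v v) where
  disjoint := disjoint_empty_left _
  card_add_card_le := by simp
  colour_mem := by simp
  isPath := Walk.IsPath.nil
  mem_support_iff := by simp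
  nodup := by simp
  colour_edges_mem := by simp

namespace IsRainbowDFSState

variable {S T : Finset V} {C : Finset κ} {u v : V}

lemma push [DecidableEq κ] {w : G.Walk u v} (h : G.IsRainbowDFSState ψ S T C w) {b : V}
    (hb : b ∈ T) (hub : G.Adj u b) (hc : ψ s(u, b) ∉ C) :
    G.IsRainbowDFSState ψ S (T.erase b) (insert (ψ s(u, b)) C) (.cons hub.symm w) where
  disjoint := h.disjoint.mono_right (erase_subset _ _)
  card_add_card_le := by
    have := card_insert_le (ψ s(u, b)) C
    have := card_erase_of_mem hb
    have := h.card_add_card_le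
    have := card_pos.2 ⟨b, hb⟩
    omega
  colour_mem a ha b' hb' hadj :=
    mem_insert_of_mem (h.colour_mem a ha b' (mem_of_mem_erase hb') hadj)
  isPath := h.isPath.cons fun hbw => ((h.mem_support_iff b).1 hbw).2 hb
  mem_support_iff x := by
    by_cases hx : x = b
    · subst hx
      simp [disjoint_right.1 h.disjoint hb]
    · simp [hx, h.mem_support_iff x]
  nodup := by
    rw [Walk.edges_cons, List.map_cons, List.nodup_cons, Sym2.eq_swap]
    refine ⟨fun hmem => hc ?_, h.nodup⟩
    obtain ⟨e, he, hψ⟩ := List.mem_map.1 hmem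
    exact hψ ▸ h.colour_edges_mem e he
  colour_edges_mem e he := by
    rw [Walk.edges_cons, List.mem_cons] at he
    rcases he with rfl | he
    · rw [Sym2.eq_swap]
      exact mem_insert_self _ _
    · exact mem_insert_of_mem (h.colour_edges_mem e he)

lemma pop_cons {u' : V} {hadj : G.Adj u u'} {w : G.Walk u' v}
    (h : G.IsRainbowDFSState ψ S T C (.cons hadj w))
    (hstuck : ∀ b ∈ T, G.Adj u b → ψ s(u, b) ∈ C) :
    G.IsRainbowDFSState ψ (insert u S) T C w where
  disjoint := disjoint_insert_left.2 ⟨((h.mem_support_iff u).1 (by simp)).2, h.disjoint⟩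
  card_add_card_le := h.card_add_card_le
  colour_mem a ha b hb hab := by
    rcases mem_insert.1 ha with rfl | ha
    · exact hstuck b hb hab
    · exact h.colour_mem a ha b hb hab
  isPath := ((Walk.cons_isPath_iff _ _).1 h.isPath).1
  mem_support_iff x := by
    have hu := ((Walk.cons_isPath_iff _ _).1 h.isPath).2
    have hx := h.mem_support_iff x
    simp only [Walk.support_cons, List.mem_cons] at hx
    simp only [mem_insert, not_or]
    constructor
    · intro hxw
      exact ⟨⟨fun hxu => hu (hxu ▸ hxw), (hx.1 (Or.inr hxw)).1⟩, (hx.1 (Or.inr hxw)).2⟩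
    · rintro ⟨⟨hxu, hxS⟩, hxT⟩
      exact (hx.2 ⟨hxS, hxT⟩).resolve_left hxu
  nodup := by
    have := h.nodup
    rw [Walk.edges_cons, List.map_cons, List.nodup_cons] at this
    exact this.2
  colour_edges_mem e he := h.colour_edges_mem e (by simp [he])

lemma pop_nil (h : G.IsRainbowDFSState ψ S T C (Walk.nil : G.Walk u u))
    (hstuck : ∀ b ∈ T, G.Adj u b → ψ s(u, b) ∈ C) {b : V} (hb : b ∈ T) :
    G.IsRainbowDFSState ψ (insert u S) (T.erase b) C (Walk.nil : G.Walk b b) where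
  disjoint := by
    refine disjoint_insert_left.2 ⟨fun hu => ?_, h.disjoint.mono_right (erase_subset _ _)⟩
    exact ((h.mem_support_iff u).1 (by simp)).2 (mem_of_mem_erase hu)
  card_add_card_le := by
    have := card_erase_le (s := T) (a := b)
    have := h.card_add_card_le
    omega
  colour_mem a ha b' hb' hab := by
    rcases mem_insert.1 ha with rfl | ha
    · exact hstuck b' (mem_of_mem_erase hb') hab
    · exact h.colour_mem a ha b' (mem_of_mem_erase hb') hab
  isPath := Walk.IsPath.nil
  mem_support_iff x := by
    have hx := h.mem_support_iff x
    have hbS := disjoint_right.1 h.disjoint hb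
    simp only [Walk.support_nil, List.mem_singleton] at hx ⊢
    simp only [mem_insert, mem_erase, not_or, not_and_or, not_not]
    constructor
    · rintro rfl
      exact ⟨⟨fun hbu => ((hx.1 hbu).2 hb), hbS⟩, Or.inl rfl⟩
    · rintro ⟨⟨hxu, hxS⟩, rfl | hxT⟩
      · rfl
      · exact absurd (hx.2 ⟨hxS, hxT⟩) hxu
  nodup := by simp
  colour_edges_mem := by simp

lemma hasRainbowDFSState_of_not_stuck {w : G.Walk u v}
    (h : G.IsRainbowDFSState ψ S T C w) {t : ℕ} (hT : #T = t + 1)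
    (hpush : ¬∀ b ∈ T, G.Adj u b → ψ s(u, b) ∈ C) : G.HasRainbowDFSState ψ t := by
  classical
  push Not at hpush
  obtain ⟨b, hb, hub, hc⟩ := hpush
  exact ⟨_, _, _, _, _, _, h.push hb hub hc, by rw [card_erase_of_mem hb, hT]; rfl⟩

/-- Popping keeps `T` and shortens the stack, so after finitely many pops either a push or a
restart from an unvisited vertex removes a vertex from `T`. -/
lemma hasRainbowDFSState_pred {w : G.Walk u v}
    (h : G.IsRainbowDFSState ψ S T C w) {t : ℕ} (hT : #T = t + 1) :
    G.HasRainbowDFSState ψ t := by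
  induction w generalizing S with
  | @nil u =>
    by_cases hstuck : ∀ b ∈ T, G.Adj u b → ψ s(u, b) ∈ C
    · obtain ⟨b, hb⟩ := card_pos.1 (by omega : 0 < #T)
      exact ⟨_, _, _, _, _, _, h.pop_nil hstuck hb, by rw [card_erase_of_mem hb, hT]; rfl⟩
    · exact h.hasRainbowDFSState_of_not_stuck hT hstuck
  | @cons u u' v hadj w ih =>
    by_cases hstuck : ∀ b ∈ T, G.Adj u b → ψ s(u, b) ∈ C
    · exact ih (h.pop_cons hstuck)
    · exact h.hasRainbowDFSState_of_not_stuck hT hstuck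

lemma card_le_length_add {w : G.Walk u v} (h : G.IsRainbowDFSState ψ S T C w) {s : ℕ}
    (hT : #T = s) (hlink : G.RainbowLinked ψ s (Fintype.card V)) :
    Fintype.card V ≤ w.length + 2 * s := by
  have hS : #S < s := by
    by_contra! hS
    obtain ⟨A, hAS, hA⟩ := exists_subset_card_eq hS
    obtain ⟨a, ha, b, hb, hab, hc⟩ :=
      hlink A T C hA hT (h.disjoint.mono_left hAS) (by have := h.card_add_card_le; omega)
    exact hc (h.colour_mem a (hAS ha) b hb hab)
  have hsupp : w.support.toFinset = (S ∪ T)ᶜ := by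
    ext x
    simp [h.mem_support_iff x]
  have hlen : w.length + 1 = Fintype.card V - #(S ∪ T) := by
    rw [← card_compl, ← hsupp, List.toFinset_card_of_nodup h.isPath.support_nodup,
      Walk.length_support]
  have := card_union_le S T
  omega

end IsRainbowDFSState

lemma HasRainbowDFSState.of_le {t₀ : ℕ} (h : G.HasRainbowDFSState ψ t₀) {t : ℕ}
    (ht : t ≤ t₀) : G.HasRainbowDFSState ψ t := by
  induction t₀ with
  | zero => rwa [Nat.le_zero.1 ht]
  | succ t₀ ih =>
    rcases ht.eq_or_lt with rfl | ht
    · exact h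
    obtain ⟨S, T, C, u, v, w, hw, hT⟩ := h
    exact ih (hw.hasRainbowDFSState_pred hT) (Nat.le_of_lt_succ ht)

theorem RainbowLinked.exists_rainbow_path [Nonempty V] {s : ℕ}
    (hlink : G.RainbowLinked ψ s (Fintype.card V)) :
    ∃ (u v : V) (w : G.Walk u v),
      w.IsPath ∧ (w.edges.map ψ).Nodup ∧ Fintype.card V ≤ w.length + 2 * s := by
  obtain ⟨v⟩ := ‹Nonempty V›
  by_cases hs : s < Fintype.card V
  · have hstart : G.HasRainbowDFSState ψ (Fintype.card V - 1) :=
      ⟨_, _, _, _, _, _, isRainbowDFSState_start v, by simp [card_erase_of_mem]⟩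
    obtain ⟨S, T, C, u, v, w, hw, hT⟩ := hstart.of_le (by omega : s ≤ Fintype.card V - 1)
    exact ⟨u, v, w, hw.isPath, hw.nodup, hw.card_le_length_add hT hlink⟩
  · exact ⟨v, v, .nil, .nil, by simp, by simp; omega⟩

end SimpleGraph

def pairsBetween {V : Type*} [DecidableEq V] (A B : Finset V) : Finset (Sym2 V) :=
  (A ×ˢ B).image fun ab => s(ab.1, ab.2)

lemma card_pairsBetween {V : Type*} [DecidableEq V] {A B : Finset V} (hd : Disjoint A B) :
    #(pairsBetween A B) = #A * #B := by
  rw [pairsBetween, card_image_of_injOn, card_product]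
  rintro ⟨a, b⟩ hab ⟨a', b'⟩ hab' h
  simp only [coe_product, Set.mem_prod, mem_coe] at hab hab'
  rcases Sym2.eq_iff.1 h with ⟨rfl, rfl⟩ | ⟨rfl, -⟩
  · rfl
  · exact (disjoint_left.1 hd hab.1 hab'.2).elim

lemma measure_prod_pi_setOf_forall_mem {ι α β : Type*} [Fintype ι] [MeasurableSpace α]
    [MeasurableSpace β] (μ : Measure α) (ν : Measure β) [IsProbabilityMeasure μ]
    [IsProbabilityMeasure ν] (E : Finset ι) (T : Set (α × β)) :
    ((Measure.pi fun _ : ι => μ).prod (Measure.pi fun _ : ι => ν))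
        {ω | ∀ i ∈ E, (ω.1 i, ω.2 i) ∈ T} = μ.prod ν T ^ #E := by
  rw [← (measurePreserving_arrowProdEquivProdArrow α β ι (fun _ => μ) (fun _ => ν)
    ).measure_preimage_equiv]
  exact (Measure.pi_pi_finset (μ := fun _ => μ.prod ν) (fun _ => T) E).trans (prod_const _)

lemma ENNReal.one_sub_ofReal_le_ofReal_exp_neg (q : ℝ) :
    1 - ENNReal.ofReal q ≤ ENNReal.ofReal (Real.exp (-q)) := by
  rcases le_total 0 q with hq | hq
  · rw [← ENNReal.ofReal_one, ← ENNReal.ofReal_sub _ hq]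
    exact ENNReal.ofReal_le_ofReal (Real.one_sub_le_exp_neg q)
  · rw [ENNReal.ofReal_of_nonpos hq, tsub_zero, ← ENNReal.ofReal_one]
    exact ENNReal.ofReal_le_ofReal (Real.one_le_exp (by linarith))

lemma Real.two_pow_le_exp (k : ℕ) : (2 : ℝ) ^ k ≤ Real.exp k := by
  rw [← Real.exp_one_pow]
  exact pow_le_pow_left₀ zero_le_two (by linarith [Real.add_one_le_exp 1]) k

instance (p : ℝ) : IsFiniteMeasure (bernoulliMeasure p) := by
  constructor
  simp only [bernoulliMeasure, Measure.add_apply, Measure.smul_apply, smul_eq_mul]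
  finiteness

lemma isProbabilityMeasure_bernoulliMeasure {p : ℝ} (h0 : 0 ≤ p) (h1 : p ≤ 1) :
    IsProbabilityMeasure (bernoulliMeasure p) := by
  constructor
  simp only [bernoulliMeasure, Measure.add_apply, Measure.smul_apply, smul_eq_mul,
    measure_univ, mul_one]
  rw [← ENNReal.ofReal_add h0 (by linarith)]
  norm_num

noncomputable abbrev uniformColour (r : ℕ) : Measure (Fin r) :=
  (r : ENNReal)⁻¹ • Measure.count

instance (r : ℕ) : IsFiniteMeasure (uniformColour r) := by
  constructor
  rcases Nat.eq_zero_or_pos r with rfl | hr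
  · simp
  · simp only [Measure.smul_apply, smul_eq_mul, Measure.count_univ,
      ENat.card_eq_coe_fintype_card, ENat.toENNReal_coe]
    exact ENNReal.mul_lt_top (ENNReal.inv_lt_top.2 (by exact_mod_cast hr)) (by finiteness)

lemma isProbabilityMeasure_uniformColour {r : ℕ} (hr : r ≠ 0) :
    IsProbabilityMeasure (uniformColour r) := by
  constructor
  simp only [Measure.smul_apply, smul_eq_mul, Measure.count_univ, ENat.card_eq_coe_fintype_card,
    ENat.toENNReal_coe, Fintype.card_fin]
  exact ENNReal.inv_mul_cancel (by exact_mod_cast hr) (by finiteness)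

lemma ofReal_one_sub_div_le_uniformColour_compl {r m : ℕ} (hr : r ≠ 0) {C : Finset (Fin r)}
    (hC : #C ≤ m) : ENNReal.ofReal (1 - m / r) ≤ uniformColour r (↑C)ᶜ := by
  have hr' : (0 : ℝ) < r := by exact_mod_cast Nat.pos_of_ne_zero hr
  have hcast : (r : ℝ) - #C ≤ ((r - #C : ℕ) : ℝ) := by
    rcases le_total #C r with h | h
    · rw [Nat.cast_sub h]
    · rw [Nat.sub_eq_zero_of_le h, Nat.cast_zero, sub_nonpos]
      exact_mod_cast h
  have hm : (#C : ℝ) ≤ m := by exact_mod_cast hC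
  rw [← coe_compl, Measure.smul_apply, Measure.count_apply_finset, card_compl,
    Fintype.card_fin, smul_eq_mul, mul_comm, ← div_eq_mul_inv, ← ENNReal.ofReal_natCast,
    ← ENNReal.ofReal_natCast r, ← ENNReal.ofReal_div_of_pos hr', one_sub_div hr'.ne']
  exact ENNReal.ofReal_le_ofReal (div_le_div_of_nonneg_right (by linarith) hr'.le)

def usableEdgeStates {r : ℕ} (C : Finset (Fin r)) : Set (Bool × Fin r) :=
  {x | x.1 = true ∧ x.2 ∉ C}

lemma ofReal_le_measure_usableEdgeStates {p : ℝ} (hp : 0 ≤ p) {r m : ℕ} (hr : r ≠ 0)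
    {C : Finset (Fin r)} (hC : #C ≤ m) :
    ENNReal.ofReal (p * (1 - m / r)) ≤
      (bernoulliMeasure p).prod (uniformColour r) (usableEdgeStates C) := by
  have hset : usableEdgeStates C = ({true} : Set Bool) ×ˢ ((↑C)ᶜ : Set (Fin r)) := by
    ext x
    simp [usableEdgeStates]
  rw [hset, Measure.prod_prod, ENNReal.ofReal_mul hp]
  have htrue : bernoulliMeasure p {true} = ENNReal.ofReal p := by
    simp [bernoulliMeasure]
  rw [htrue]
  exact mul_le_mul_right (ofReal_one_sub_div_le_uniformColour_compl hr hC) _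

lemma measure_usableEdgeStates_compl_le {p : ℝ} (h0 : 0 ≤ p) (h1 : p ≤ 1) {r m : ℕ}
    (hr : r ≠ 0) {C : Finset (Fin r)} (hC : #C ≤ m) :
    (bernoulliMeasure p).prod (uniformColour r) (usableEdgeStates C)ᶜ ≤
      ENNReal.ofReal (Real.exp (-(p * (1 - m / r)))) := by
  have := isProbabilityMeasure_bernoulliMeasure h0 h1
  have := isProbabilityMeasure_uniformColour hr
  rw [prob_compl_eq_one_sub (Set.to_countable _).measurableSet]
  exact (tsub_le_tsub_left (ofReal_le_measure_usableEdgeStates h0 hr hC) 1).trans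
    (ENNReal.one_sub_ofReal_le_ofReal_exp_neg _)

lemma isProbabilityMeasure_graphMeasure_prod_colourMeasure {n r : ℕ} {p : ℝ} (h0 : 0 ≤ p)
    (h1 : p ≤ 1) (hr : r ≠ 0) :
    IsProbabilityMeasure ((graphMeasure n p).prod (colourMeasure n r)) := by
  have := isProbabilityMeasure_bernoulliMeasure h0 h1
  have := isProbabilityMeasure_uniformColour hr
  unfold graphMeasure colourMeasure
  infer_instance

lemma measure_forall_pairsBetween_not_usable_le {n r m : ℕ} {p : ℝ} (h0 : 0 ≤ p)
    (h1 : p ≤ 1) (hr : r ≠ 0) {A B : Finset (Fin n)} (hd : Disjoint A B) {C : Finset (Fin r)}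
    (hC : #C ≤ m) :
    (graphMeasure n p).prod (colourMeasure n r)
        {ω | ∀ e ∈ pairsBetween A B, (ω.1 e, ω.2 e) ∈ (usableEdgeStates C)ᶜ} ≤
      ENNReal.ofReal (Real.exp (-(p * (1 - m / r)) * (#A * #B))) := by
  have := isProbabilityMeasure_bernoulliMeasure h0 h1
  have := isProbabilityMeasure_uniformColour hr
  rw [graphMeasure, colourMeasure, measure_prod_pi_setOf_forall_mem, card_pairsBetween hd]
  calc _ ≤ ENNReal.ofReal (Real.exp (-(p * (1 - m / r)))) ^ (#A * #B) :=
        pow_le_pow_left' (measure_usableEdgeStates_compl_le h0 h1 hr hC) _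
    _ = _ := by
        rw [← ENNReal.ofReal_pow (Real.exp_nonneg _), ← Real.exp_nat_mul, mul_comm]
        push_cast
        rfl

lemma setOf_not_rainbowLinked_subset {n r s m : ℕ} :
    {ω : (Sym2 (Fin n) → Bool) × (Sym2 (Fin n) → Fin r) |
        ¬(graphOf ω.1).RainbowLinked ω.2 s m} ⊆
      ⋃ x ∈ univ.filter (fun x : Finset (Fin n) × Finset (Fin n) × Finset (Fin r) =>
          #x.1 = s ∧ #x.2.1 = s ∧ Disjoint x.1 x.2.1 ∧ #x.2.2 ≤ m),
        {ω | ∀ e ∈ pairsBetween x.1 x.2.1,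
          (ω.1 e, ω.2 e) ∈ (usableEdgeStates x.2.2)ᶜ} := by
  intro ω hω
  simp only [SimpleGraph.RainbowLinked, Set.mem_ofPred_eq] at hω
  push Not at hω
  obtain ⟨A, B, C, hA, hB, hd, hC, hbad⟩ := hω
  refine Set.mem_biUnion (x := (A, B, C)) (by simp [hA, hB, hd, hC]) ?_
  simp only [pairsBetween, mem_image, mem_product, usableEdgeStates, Set.mem_compl_iff,
    Set.mem_ofPred_eq, not_and, not_not]
  rintro _ ⟨⟨a, b⟩, ⟨ha, hb⟩, rfl⟩ hab
  exact hbad a ha b hb ⟨hab, fun h => disjoint_left.1 hd ha (h ▸ hb)⟩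

lemma measure_not_rainbowLinked_le {n r s m : ℕ} {p : ℝ} (h0 : 0 ≤ p) (h1 : p ≤ 1)
    (hr : r ≠ 0) :
    (graphMeasure n p).prod (colourMeasure n r)
        {ω | ¬(graphOf ω.1).RainbowLinked ω.2 s m} ≤
      ENNReal.ofReal (Real.exp (2 * n + r - p * (1 - m / r) * s ^ 2)) := by
  set bound := ENNReal.ofReal (Real.exp (-(p * (1 - m / r)) * (s * s)))
  have hcount : #(univ : Finset (Finset (Fin n) × Finset (Fin n) × Finset (Fin r))) ≤
      ENNReal.ofReal (Real.exp (2 * n + r)) := by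
    rw [card_univ, ← ENNReal.ofReal_natCast]
    refine ENNReal.ofReal_le_ofReal ?_
    simp only [Fintype.card_prod, Fintype.card_finset, Fintype.card_fin]
    have := Real.two_pow_le_exp (2 * n + r)
    push_cast at this
    convert this using 1
    push_cast
    ring
  calc _ ≤ _ := measure_mono setOf_not_rainbowLinked_subset
    _ ≤ _ := measure_biUnion_finset_le _ _
    _ ≤ #(univ : Finset (Finset (Fin n) × Finset (Fin n) × Finset (Fin r))) * bound := by
        refine (sum_le_card_nsmul _ _ bound fun x hx => ?_).trans ?_
        · obtain ⟨hA, hB, hd, hC⟩ := (mem_filter.1 hx).2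
          have := measure_forall_pairsBetween_not_usable_le h0 h1 hr hd hC
          rwa [hA, hB] at this
        · rw [nsmul_eq_mul]
          gcongr
          exact filter_subset _ _
    _ ≤ ENNReal.ofReal (Real.exp (2 * n + r)) * bound := by gcongr
    _ = _ := by
        rw [← ENNReal.ofReal_mul (Real.exp_nonneg _), ← Real.exp_add]
        ring_nf

lemma SimpleGraph.RainbowLinked.hasRainbowPath {n : ℕ} (hn : n ≠ 0) {κ : Type*}
    {G : SimpleGraph (Fin n)} {ψ : Sym2 (Fin n) → κ} {s : ℕ} (h : G.RainbowLinked ψ s n)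
    {L : ℝ} (hL : L + 2 * s ≤ n) : HasRainbowPath G ψ L := by
  have : NeZero n := ⟨hn⟩
  obtain ⟨u, v, w, hw, hψ, hlen⟩ :=
    SimpleGraph.RainbowLinked.exists_rainbow_path (G := G) (ψ := ψ) (s := s)
      (by rwa [Fintype.card_fin])
  refine ⟨u, v, w, hw, ?_, hψ⟩
  rw [Fintype.card_fin] at hlen
  have : (n : ℝ) ≤ w.length + 2 * s := by exact_mod_cast hlen
  linarith

lemma one_sub_exp_neg_le_measure_hasRainbowPath {n r s : ℕ} {p L : ℝ} (hn : n ≠ 0)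
    (h0 : 0 ≤ p) (h1 : p ≤ 1) (hr : r ≠ 0) (hL : L + 2 * s ≤ n)
    (hexp : 3 * n + r ≤ p * (1 - n / r) * s ^ 2) :
    1 - ENNReal.ofReal (Real.exp (-n)) ≤
      (graphMeasure n p).prod (colourMeasure n r)
        {ω | HasRainbowPath (graphOf ω.1) ω.2 L} := by
  have := isProbabilityMeasure_graphMeasure_prod_colourMeasure (n := n) h0 h1 hr
  calc _ ≤ 1 - (graphMeasure n p).prod (colourMeasure n r)
          {ω | ¬(graphOf ω.1).RainbowLinked ω.2 s n} := by
        refine tsub_le_tsub_left ((measure_not_rainbowLinked_le h0 h1 hr).trans ?_) 1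
        exact ENNReal.ofReal_le_ofReal (Real.exp_le_exp.2 (by linarith))
    _ = (graphMeasure n p).prod (colourMeasure n r)
          {ω | (graphOf ω.1).RainbowLinked ω.2 s n} := by
        rw [← prob_compl_eq_one_sub (Set.to_countable _).measurableSet, Set.compl_ofPred]
        simp only [not_not]
    _ ≤ _ := measure_mono fun ω hω => SimpleGraph.RainbowLinked.hasRainbowPath hn hω hL

noncomputable def rainbowPathConstant (α ε : ℝ) : ℝ :=
  16 * (1 + α) * (5 + α) / (α * ε ^ 2)

lemma three_mul_add_le_rainbowPathConstant {α ε x r s : ℝ} (hα : 0 < α) (hε : 0 < ε)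
    (hx : 1 ≤ x) (hr : (1 + α) * x ≤ r) (hr' : r ≤ (1 + α) * x + 1)
    (hs : ε * x / 4 ≤ s) :
    3 * x + r ≤ rainbowPathConstant α ε / x * (1 - x / r) * s ^ 2 := by
  have hx0 : 0 < x := by linarith
  have hr0 : 0 < r := by nlinarith
  have hfrac : α / (1 + α) ≤ 1 - x / r := by
    rw [div_le_iff₀ (by linarith), sub_mul, div_mul_eq_mul_div, le_sub_iff_add_le,
      ← le_sub_iff_add_le', div_le_iff₀ hr0]
    nlinarith
  calc 3 * x + r ≤ (5 + α) * x := by nlinarith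
    _ = rainbowPathConstant α ε / x * (α / (1 + α)) * (ε * x / 4) ^ 2 := by
        unfold rainbowPathConstant
        field_simp
        ring
    _ ≤ rainbowPathConstant α ε / x * (1 - x / r) * s ^ 2 := by
        have hK : 0 ≤ rainbowPathConstant α ε := by unfold rainbowPathConstant; positivity
        gcongr
        exact mul_nonneg (by positivity) ((div_nonneg hα.le (by linarith)).trans hfrac)

lemma eventually_measure_hasRainbowPath_mem_Icc {α ε : ℝ} (hα : 0 < α) (hε : 0 < ε) :
    ∀ᶠ n : ℕ in Filter.atTop,
      ((graphMeasure n (rainbowPathConstant α ε / n)).prod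
          (colourMeasure n ⌈(1 + α) * (n : ℝ)⌉₊))
        {ω | HasRainbowPath (graphOf ω.1) ω.2 ((1 - ε) * n)} ∈
      Set.Icc (1 - ENNReal.ofReal (Real.exp (-n))) 1 := by
  have hK : 0 ≤ rainbowPathConstant α ε := by unfold rainbowPathConstant; positivity
  filter_upwards [Filter.eventually_ge_atTop ⌈rainbowPathConstant α ε⌉₊,
    Filter.eventually_ge_atTop ⌈4 / ε⌉₊] with n hnK hnε
  rw [Nat.ceil_le] at hnK hnε
  have hεn : 4 ≤ ε * n := by rwa [div_le_iff₀' hε] at hnε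
  have hn : n ≠ 0 := by rintro rfl; simp at hεn; linarith
  have hn1 : (1 : ℝ) ≤ n := by exact_mod_cast Nat.one_le_iff_ne_zero.2 hn
  have hr : (1 + α) * n ≤ ⌈(1 + α) * (n : ℝ)⌉₊ := Nat.le_ceil _
  have hr' : (⌈(1 + α) * (n : ℝ)⌉₊ : ℝ) ≤ (1 + α) * n + 1 :=
    (Nat.ceil_lt_add_one (by positivity)).le
  have hr0 : ⌈(1 + α) * (n : ℝ)⌉₊ ≠ 0 := by
    rw [← Nat.cast_ne_zero (R := ℝ)]; nlinarith
  have hs : ε * n / 4 ≤ ⌊ε * n / 2⌋₊ := by linarith [Nat.lt_floor_add_one (ε * n / 2)]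
  have hs' : (⌊ε * n / 2⌋₊ : ℝ) ≤ ε * n / 2 := Nat.floor_le (by positivity)
  have hp0 : 0 ≤ rainbowPathConstant α ε / n := by positivity
  have hp1 : rainbowPathConstant α ε / n ≤ 1 := div_le_one_of_le₀ hnK (by positivity)
  have := isProbabilityMeasure_graphMeasure_prod_colourMeasure (n := n) hp0 hp1 hr0
  exact ⟨one_sub_exp_neg_le_measure_hasRainbowPath hn hp0 hp1 hr0 (by linarith)
    (three_mul_add_le_rainbowPathConstant hα hε hn1 hr hr' hs), prob_le_one⟩

lemma tendsto_one_sub_ofReal_exp_neg_natCast :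
    Filter.Tendsto (fun n : ℕ => 1 - ENNReal.ofReal (Real.exp (-n))) Filter.atTop (nhds 1) := by
  have h : Filter.Tendsto (fun n : ℕ => ENNReal.ofReal (Real.exp (-n))) Filter.atTop
      (nhds 0) := by
    rw [← ENNReal.ofReal_zero]
    exact ENNReal.tendsto_ofReal
      (Real.tendsto_exp_neg_atTop_nhds_zero.comp tendsto_natCast_atTop_atTop)
  simpa using ENNReal.Tendsto.sub tendsto_const_nhds h (Or.inl ENNReal.one_ne_top)

/-- **Corollary (almost spanning rainbow paths in `𝔾(n, K/n)`).**
For every `α, ε > 0` there is a constant `K` such that colouring the edges of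
`𝔾(n, K/n)` independently and uniformly at random with `⌈(1+α)·n⌉` colours a.a.s.
yields a rainbow path of length at least `(1-ε)·n`. -/
theorem rainbow_path_random_graph (α ε : ℝ) (hα : 0 < α) (hε : 0 < ε) :
    ∃ K : ℝ,
      Filter.Tendsto
        (fun n =>
          ((graphMeasure n (K / n)).prod (colourMeasure n ⌈(1 + α) * (n : ℝ)⌉₊))
            {ω | HasRainbowPath (graphOf ω.1) ω.2 ((1 - ε) * n)})
        Filter.atTop (nhds 1) := by
  have h := eventually_measure_hasRainbowPath_mem_Icc hα hε
  exact ⟨rainbowPathConstant α ε, tendsto_of_tendsto_of_tendsto_of_le_of_le'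
    tendsto_one_sub_ofReal_exp_neg_natCast tendsto_const_nhds
    (h.mono fun _ hn => hn.1) (h.mono fun _ hn => hn.2)⟩
end

section
/- Let H be a graph with edge-colouring ψ : E(H) → ℕ, and let P = p₁ p₂ … p_ℓ be a path in H that is rainbow under ψ, with colour set A = {ψ(p_i p_{i+1}) : 1 ≤ i ≤ ℓ − 1}. Let v ∈ V(H) \ V(P), and suppose there is an index j with 2 ≤ j ≤ ℓ − 1 such that: the pairs p_j p_ℓ, p_{j−1} v, and p_{j+1} v are all edges of H; the three colours ψ(p_j p_ℓ), ψ(p_{j−1} v), ψ(p_{j+1} v) are pairwise distinct; and none of these three colours belongs to A. Then p₁ p₂ … p_{j−1} v p_{j+1} … p_ℓ p_j is a path in H with vertex set V(P) ∪ {v} that is rainbow under ψ. -/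
set_option maxHeartbeats 1600000


/-- **Absorption of a single vertex into a rainbow path.**
Let `P = p₁ p₂ … p_ℓ` be a rainbow path in `H` (encoded as an injective map
`p : Fin ℓ → V` with `p_k = p ⟨k-1⟩`, consecutive vertices adjacent, and pairwise
distinct edge colours), let `v ∉ V(P)` and let `2 ≤ j ≤ ℓ - 1` be such that
`p_j p_ℓ`, `p_{j-1} v`, `p_{j+1} v` are edges of `H` whose three colours are pairwise
distinct and avoid the colours of `P`. Then `p₁ … p_{j-1} v p_{j+1} … p_ℓ p_j` is a
rainbow path in `H` with vertex set `V(P) ∪ {v}`. -/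
theorem absorb_vertex {V : Type*} (H : SimpleGraph V) (ψ : Sym2 V → ℕ)
    (ℓ : ℕ) (p : Fin ℓ → V)
    (hp_inj : Function.Injective p)
    (hp_adj : ∀ i : ℕ, (h : i + 1 < ℓ) → H.Adj (p ⟨i, by omega⟩) (p ⟨i + 1, h⟩))
    (hp_rb : ∀ i k : ℕ, (hi : i + 1 < ℓ) → (hk : k + 1 < ℓ) →
      ψ s(p ⟨i, by omega⟩, p ⟨i + 1, hi⟩) = ψ s(p ⟨k, by omega⟩, p ⟨k + 1, hk⟩) → i = k)
    (v : V) (hv : v ∉ Set.range p)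
    (j : ℕ) (hj2 : 2 ≤ j) (hjℓ : j ≤ ℓ - 1)
    (he1 : H.Adj (p ⟨j - 1, by omega⟩) (p ⟨ℓ - 1, by omega⟩))
    (he2 : H.Adj (p ⟨j - 2, by omega⟩) v)
    (he3 : H.Adj (p ⟨j, by omega⟩) v)
    (hdist : ([ψ s(p ⟨j - 1, by omega⟩, p ⟨ℓ - 1, by omega⟩),
               ψ s(p ⟨j - 2, by omega⟩, v),
               ψ s(p ⟨j, by omega⟩, v)] : List ℕ).Nodup)
    (havoid : ∀ i : ℕ, (hi : i + 1 < ℓ) →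
      ψ s(p ⟨i, by omega⟩, p ⟨i + 1, hi⟩) ∉
        ([ψ s(p ⟨j - 1, by omega⟩, p ⟨ℓ - 1, by omega⟩),
          ψ s(p ⟨j - 2, by omega⟩, v),
          ψ s(p ⟨j, by omega⟩, v)] : List ℕ)) :
    ∃ q : Fin (ℓ + 1) → V,
      (q = fun t : Fin (ℓ + 1) =>
        if ht : (t : ℕ) < ℓ then
          (if (t : ℕ) = j - 1 then v else p ⟨(t : ℕ), ht⟩)
        else p ⟨j - 1, by omega⟩) ∧
      Function.Injective q ∧
      (∀ i : ℕ, (h : i + 1 < ℓ + 1) → H.Adj (q ⟨i, by omega⟩) (q ⟨i + 1, h⟩)) ∧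
      Set.range q = Set.range p ∪ {v} ∧
      (∀ i k : ℕ, (hi : i + 1 < ℓ + 1) → (hk : k + 1 < ℓ + 1) →
        ψ s(q ⟨i, by omega⟩, q ⟨i + 1, hi⟩) = ψ s(q ⟨k, by omega⟩, q ⟨k + 1, hk⟩) →
        i = k) := by

  have hℓ3 : 3 ≤ ℓ := by omega
  have hjlt : j - 1 < ℓ := by omega
  obtain ⟨q, hqdef⟩ : ∃ q : Fin (ℓ + 1) → V, q = fun t : Fin (ℓ + 1) =>
      if ht : (t : ℕ) < ℓ then
        (if (t : ℕ) = j - 1 then v else p ⟨(t : ℕ), ht⟩)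
      else p ⟨j - 1, by omega⟩ := ⟨_, rfl⟩
  have hqval : ∀ t : Fin (ℓ + 1), q t = if ht : (t : ℕ) < ℓ then
      (if (t : ℕ) = j - 1 then v else p ⟨(t : ℕ), ht⟩) else p ⟨j - 1, by omega⟩ := by
    intro t; rw [hqdef]
  have hv' : ∀ (i : ℕ) (h : i < ℓ), v ≠ p ⟨i, h⟩ := fun i h he => hv ⟨⟨i, h⟩, he.symm⟩
  have hpij : ∀ (a b : ℕ) (ha : a < ℓ) (hb : b < ℓ), p ⟨a, ha⟩ = p ⟨b, hb⟩ → a = b := by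
    intro a b ha hb h
    exact congrArg Fin.val (hp_inj h)
  have hqv : ∀ (i : ℕ) (h : i < ℓ) (h' : i < ℓ + 1), i ≠ j - 1 → q ⟨i, h'⟩ = p ⟨i, h⟩ := by
    intro i h h' hij
    rw [hqval]; simp only [Fin.val_mk]; rw [dif_pos h, if_neg hij]
  have hqj : ∀ (h' : j - 1 < ℓ + 1), q ⟨j - 1, h'⟩ = v := by
    intro h'; rw [hqval]; simp [hjlt]
  have hqℓ : ∀ (h' : ℓ < ℓ + 1), q ⟨ℓ, h'⟩ = p ⟨j - 1, hjlt⟩ := by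
    intro h'; rw [hqval]; simp only [Fin.val_mk]; rw [dif_neg (lt_irrefl ℓ)]
  -- injectivity
  have hinj : Function.Injective q := by
    intro a b hab
    rw [hqval a, hqval b] at hab
    apply Fin.ext
    by_cases ha : (a : ℕ) < ℓ
    · by_cases hb : (b : ℕ) < ℓ
      · rw [dif_pos ha, dif_pos hb] at hab
        by_cases haj : (a : ℕ) = j - 1
        · by_cases hbj : (b : ℕ) = j - 1
          · omega
          · rw [if_pos haj, if_neg hbj] at hab
            exact absurd hab (hv' _ _)
        · by_cases hbj : (b : ℕ) = j - 1
          · rw [if_neg haj, if_pos hbj] at hab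
            exact absurd hab.symm (hv' _ _)
          · rw [if_neg haj, if_neg hbj] at hab
            exact hpij _ _ _ _ hab
      · rw [dif_pos ha, dif_neg hb] at hab
        by_cases haj : (a : ℕ) = j - 1
        · rw [if_pos haj] at hab; exact absurd hab (hv' _ _)
        · rw [if_neg haj] at hab
          have := hpij _ _ _ _ hab; omega
    · by_cases hb : (b : ℕ) < ℓ
      · rw [dif_neg ha, dif_pos hb] at hab
        by_cases hbj : (b : ℕ) = j - 1
        · rw [if_pos hbj] at hab; exact absurd hab.symm (hv' _ _)
        · rw [if_neg hbj] at hab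
          have := hpij _ _ _ _ hab; omega
      · have := a.isLt; have := b.isLt; omega
  -- range
  have hrange : Set.range q = Set.range p ∪ {v} := by
    ext x
    constructor
    · rintro ⟨t, rfl⟩
      rw [hqval]
      by_cases ht : (t : ℕ) < ℓ
      · rw [dif_pos ht]
        by_cases htj : (t : ℕ) = j - 1
        · rw [if_pos htj]; right; rfl
        · rw [if_neg htj]; left; exact ⟨_, rfl⟩
      · rw [dif_neg ht]; left; exact ⟨_, rfl⟩
    · rintro (⟨i, rfl⟩ | hx)
      · by_cases hij : (i : ℕ) = j - 1
        · refine ⟨⟨ℓ, by omega⟩, ?_⟩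
          rw [hqℓ (by omega)]
          congr 1
          exact Fin.ext hij.symm
        · exact ⟨⟨(i : ℕ), by omega⟩, hqv (i : ℕ) i.isLt (by omega) hij⟩
      · rw [Set.mem_singleton_iff.mp hx]
        exact ⟨⟨j - 1, by omega⟩, hqj _⟩
  -- adjacency
  have hadj : ∀ i : ℕ, (h : i + 1 < ℓ + 1) → H.Adj (q ⟨i, by omega⟩) (q ⟨i + 1, h⟩) := by
    intro i h
    have hiℓ : i < ℓ := by omega
    by_cases hlast : i + 1 = ℓ
    · have h1 : i ≠ j - 1 := by omega
      rw [hqv i hiℓ (by omega) h1,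
        show (⟨i + 1, h⟩ : Fin (ℓ + 1)) = ⟨ℓ, by omega⟩ from Fin.mk_eq_mk.mpr hlast, hqℓ,
        show (⟨i, hiℓ⟩ : Fin ℓ) = ⟨ℓ - 1, by omega⟩ from Fin.mk_eq_mk.mpr (by omega)]
      exact he1.symm
    · have hi1 : i + 1 < ℓ := by omega
      by_cases h2 : i = j - 2
      · rw [hqv i hiℓ (by omega) (by omega),
          show (⟨i + 1, h⟩ : Fin (ℓ + 1)) = ⟨j - 1, by omega⟩ from Fin.mk_eq_mk.mpr (by omega), hqj,
          show (⟨i, hiℓ⟩ : Fin ℓ) = ⟨j - 2, by omega⟩ from Fin.mk_eq_mk.mpr (by omega)]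
        exact he2
      · by_cases h3 : i = j - 1
        · rw [show (⟨i, by omega⟩ : Fin (ℓ + 1)) = ⟨j - 1, by omega⟩ from Fin.mk_eq_mk.mpr h3, hqj,
            hqv (i + 1) hi1 (by omega) (by omega),
            show (⟨i + 1, hi1⟩ : Fin ℓ) = ⟨j, by omega⟩ from Fin.mk_eq_mk.mpr (by omega)]
          exact he3.symm
        · rw [hqv i hiℓ (by omega) h3, hqv (i + 1) hi1 (by omega) (by omega)]
          exact hp_adj i hi1
  -- colours
  simp only [List.nodup_cons, List.mem_cons, List.mem_singleton, not_or,
    List.not_mem_nil, not_false_iff, and_true, List.nodup_nil] at hdist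
  obtain ⟨⟨h12, h13⟩, h23⟩ := hdist
  have havoid' : ∀ (i : ℕ) (hi : i + 1 < ℓ),
      ψ s(p ⟨i, by omega⟩, p ⟨i + 1, hi⟩) ≠ ψ s(p ⟨j - 1, by omega⟩, p ⟨ℓ - 1, by omega⟩) ∧
      ψ s(p ⟨i, by omega⟩, p ⟨i + 1, hi⟩) ≠ ψ s(p ⟨j - 2, by omega⟩, v) ∧
      ψ s(p ⟨i, by omega⟩, p ⟨i + 1, hi⟩) ≠ ψ s(p ⟨j, by omega⟩, v) := by
    intro i hi
    have := havoid i hi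
    simp only [List.mem_cons, List.mem_singleton, not_or, List.not_mem_nil,
      not_false_iff, and_true] at this
    exact this
  have hj2l : j - 2 < ℓ := by omega
  have hjl : j < ℓ := by omega
  have hl1 : ℓ - 1 < ℓ := by omega
  have hcol : ∀ (i : ℕ) (hi : i + 1 < ℓ + 1) (hi0 : i < ℓ + 1),
      (i = j - 2 ∧ ψ s(q ⟨i, hi0⟩, q ⟨i + 1, hi⟩) = ψ s(p ⟨j - 2, hj2l⟩, v)) ∨
      (i = j - 1 ∧ ψ s(q ⟨i, hi0⟩, q ⟨i + 1, hi⟩) = ψ s(p ⟨j, hjl⟩, v)) ∨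
      (i = ℓ - 1 ∧ ψ s(q ⟨i, hi0⟩, q ⟨i + 1, hi⟩) =
        ψ s(p ⟨j - 1, hjlt⟩, p ⟨ℓ - 1, hl1⟩)) ∨
      (i ≠ j - 2 ∧ i ≠ j - 1 ∧ i ≠ ℓ - 1 ∧ ∃ hi' : i + 1 < ℓ,
        ψ s(q ⟨i, hi0⟩, q ⟨i + 1, hi⟩) = ψ s(p ⟨i, by omega⟩, p ⟨i + 1, hi'⟩)) := by
    intro i hi hi0
    have hiℓ : i < ℓ := by omega
    by_cases hlast : i + 1 = ℓ
    · refine Or.inr (Or.inr (Or.inl ⟨by omega, ?_⟩))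
      have e1 : q ⟨i, hi0⟩ = p ⟨ℓ - 1, hl1⟩ :=
        (hqv i hiℓ hi0 (by omega)).trans (congrArg p (Fin.mk_eq_mk.mpr (by omega)))
      have e2 : q ⟨i + 1, hi⟩ = p ⟨j - 1, hjlt⟩ := by
        rw [show (⟨i + 1, hi⟩ : Fin (ℓ + 1)) = ⟨ℓ, by omega⟩ from Fin.mk_eq_mk.mpr hlast]
        exact hqℓ _
      rw [e1, e2, Sym2.eq_swap]
    · have hi1 : i + 1 < ℓ := by omega
      by_cases h2 : i = j - 2
      · refine Or.inl ⟨h2, ?_⟩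
        have e1 : q ⟨i, hi0⟩ = p ⟨j - 2, hj2l⟩ :=
          (hqv i hiℓ hi0 (by omega)).trans (congrArg p (Fin.mk_eq_mk.mpr h2))
        have e2 : q ⟨i + 1, hi⟩ = v := by
          rw [show (⟨i + 1, hi⟩ : Fin (ℓ + 1)) = ⟨j - 1, by omega⟩ from
            Fin.mk_eq_mk.mpr (by omega)]
          exact hqj _
        rw [e1, e2]
      · by_cases h3 : i = j - 1
        · refine Or.inr (Or.inl ⟨h3, ?_⟩)
          have e1 : q ⟨i, hi0⟩ = v := by
            rw [show (⟨i, hi0⟩ : Fin (ℓ + 1)) = ⟨j - 1, by omega⟩ from Fin.mk_eq_mk.mpr h3]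
            exact hqj _
          have e2 : q ⟨i + 1, hi⟩ = p ⟨j, hjl⟩ :=
            (hqv (i + 1) hi1 hi (by omega)).trans
              (congrArg p (Fin.mk_eq_mk.mpr (by omega)))
          rw [e1, e2, Sym2.eq_swap]
        · refine Or.inr (Or.inr (Or.inr ⟨h2, h3, by omega, hi1, ?_⟩))
          rw [hqv i hiℓ hi0 h3, hqv (i + 1) hi1 hi (by omega)]
  refine ⟨q, hqdef, hinj, hadj, hrange, ?_⟩
  intro i k hi hk heq
  rcases hcol i hi (by omega) with ⟨hi1, hieq⟩ | ⟨hi1, hieq⟩ | ⟨hi1, hieq⟩ | ⟨hi1, hi2, hi3, hi', hieq⟩ <;>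
    rcases hcol k hk (by omega) with ⟨hk1, hkeq⟩ | ⟨hk1, hkeq⟩ | ⟨hk1, hkeq⟩ | ⟨hk1, hk2, hk3, hk', hkeq⟩ <;>
    replace heq := hieq.symm.trans (heq.trans hkeq)
  all_goals first
    | omega
    | exact hp_rb _ _ _ _ heq
    | exact absurd heq h23
    | exact absurd heq.symm h23
    | exact absurd heq h12
    | exact absurd heq.symm h12
    | exact absurd heq h13
    | exact absurd heq.symm h13
    | exact absurd heq.symm (havoid' k hk').1
    | exact absurd heq.symm (havoid' k hk').2.1
    | exact absurd heq.symm (havoid' k hk').2.2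
    | exact absurd heq (havoid' i hi').1
    | exact absurd heq (havoid' i hi').2.1
    | exact absurd heq (havoid' i hi').2.2
end

section
/- Let H be a graph on n vertices with edge-colouring ψ : E(H) → ℕ, let P = p₁ p₂ … p_{n−2} be a path in H that is rainbow under ψ, and let x, y be the two vertices of V(H) \ V(P). Suppose there exist indices i, j with 2 ≤ i, i + 2 ≤ j, and j ≤ n − 3 such that: the seven pairs p_i p₁, p_{i−1} x, p_{i+1} x, p_j p_{n−2}, p_{j−1} y, p_{j+1} y, and p_i p_j are all edges of H; the seven colours ψ(p_i p_j), ψ(p₁ p_i), ψ(x p_{i−1}), ψ(x p_{i+1}), ψ(p_{n−2} p_j), ψ(y p_{j−1}), ψ(y p_{j+1}) are pairwise distinct; and none of these seven colours appears on an edge of P. Then the cyclic sequence p_i p₁ p₂ … p_{i−1} x p_{i+1} … p_{j−1} y p_{j+1} … p_{n−2} p_j p_i is a Hamilton cycle of H that is rainbow under ψ. -/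
set_option maxHeartbeats 4000000

/-- **Closing a rainbow path into a rainbow Hamilton cycle.**
Let `H` be a graph on `n` vertices, `P = p₁ … p_{n-2}` a rainbow path (encoded as an
injective map `p : Fin (n-2) → Fin n` with `p_k = p ⟨k-1⟩`, consecutive vertices
adjacent, pairwise distinct edge colours), and let `x, y` be the two vertices outside
`P`. Suppose `2 ≤ i`, `i + 2 ≤ j`, `j ≤ n - 3`, the seven pairs
`p_i p₁, p_{i-1} x, p_{i+1} x, p_j p_{n-2}, p_{j-1} y, p_{j+1} y, p_i p_j` are edges of
`H`, their seven colours are pairwise distinct, and none of them occurs on an edge of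
`P`. Then the cyclic sequence `p_i p₁ … p_{i-1} x p_{i+1} … p_{j-1} y p_{j+1} … p_{n-2} p_j`
is a rainbow Hamilton cycle of `H` (encoded as a bijection `q : Fin n → Fin n` with
cyclically consecutive vertices adjacent and pairwise distinct edge colours). -/
theorem close_rainbow_hamilton_cycle (n : ℕ) (H : SimpleGraph (Fin n))
    (ψ : Sym2 (Fin n) → ℕ) (p : Fin (n - 2) → Fin n)
    (hp_inj : Function.Injective p)
    (hp_adj : ∀ t : ℕ, (h : t + 1 < n - 2) → H.Adj (p ⟨t, by omega⟩) (p ⟨t + 1, h⟩))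
    (hp_rb : ∀ t s : ℕ, (ht : t + 1 < n - 2) → (hs : s + 1 < n - 2) →
      ψ s(p ⟨t, by omega⟩, p ⟨t + 1, ht⟩) = ψ s(p ⟨s, by omega⟩, p ⟨s + 1, hs⟩) → t = s)
    (x y : Fin n) (hxy : x ≠ y) (hx : x ∉ Set.range p) (hy : y ∉ Set.range p)
    (i j : ℕ) (hi2 : 2 ≤ i) (hij : i + 2 ≤ j) (hjn : j ≤ n - 3)
    (he1 : H.Adj (p ⟨i - 1, by omega⟩) (p ⟨0, by omega⟩))
    (he2 : H.Adj (p ⟨i - 2, by omega⟩) x)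
    (he3 : H.Adj (p ⟨i, by omega⟩) x)
    (he4 : H.Adj (p ⟨j - 1, by omega⟩) (p ⟨n - 3, by omega⟩))
    (he5 : H.Adj (p ⟨j - 2, by omega⟩) y)
    (he6 : H.Adj (p ⟨j, by omega⟩) y)
    (he7 : H.Adj (p ⟨i - 1, by omega⟩) (p ⟨j - 1, by omega⟩))
    (hdist : ([ψ s(p ⟨i - 1, by omega⟩, p ⟨j - 1, by omega⟩),
               ψ s(p ⟨0, by omega⟩, p ⟨i - 1, by omega⟩),
               ψ s(x, p ⟨i - 2, by omega⟩),
               ψ s(x, p ⟨i, by omega⟩),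
               ψ s(p ⟨n - 3, by omega⟩, p ⟨j - 1, by omega⟩),
               ψ s(y, p ⟨j - 2, by omega⟩),
               ψ s(y, p ⟨j, by omega⟩)] : List ℕ).Nodup)
    (havoid : ∀ t : ℕ, (ht : t + 1 < n - 2) →
      ψ s(p ⟨t, by omega⟩, p ⟨t + 1, ht⟩) ∉
        ([ψ s(p ⟨i - 1, by omega⟩, p ⟨j - 1, by omega⟩),
          ψ s(p ⟨0, by omega⟩, p ⟨i - 1, by omega⟩),
          ψ s(x, p ⟨i - 2, by omega⟩),
          ψ s(x, p ⟨i, by omega⟩),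
          ψ s(p ⟨n - 3, by omega⟩, p ⟨j - 1, by omega⟩),
          ψ s(y, p ⟨j - 2, by omega⟩),
          ψ s(y, p ⟨j, by omega⟩)] : List ℕ)) :
    ∃ q : Fin n → Fin n,
      (q = fun t : Fin n =>
        if h0 : (t : ℕ) = 0 then p ⟨i - 1, by omega⟩
        else if hl : (t : ℕ) = n - 1 then p ⟨j - 1, by omega⟩
        else if hx' : (t : ℕ) = i then x
        else if hy' : (t : ℕ) = j then y
        else p ⟨(t : ℕ) - 1, by have := t.isLt; omega⟩) ∧
      Function.Bijective q ∧
      (∀ t : Fin n, H.Adj (q t) (q (t + ⟨1, by omega⟩))) ∧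
      Function.Injective (fun t : Fin n => ψ s(q t, q (t + ⟨1, by omega⟩))) := by
  have hn : 7 ≤ n := by omega
  have hone : (1:ℕ) < n := by omega
  have hpe : ∀ (a b : ℕ) (ha : a < n - 2) (hb : b < n - 2), a = b → p ⟨a, ha⟩ = p ⟨b, hb⟩ := by
    intro a b ha hb h; subst h; rfl
  obtain ⟨Q, hQdef⟩ : ∃ Q' : Fin n → Fin n, Q' = fun t : Fin n =>
      if h0 : (t : ℕ) = 0 then p ⟨i - 1, by omega⟩
      else if hl : (t : ℕ) = n - 1 then p ⟨j - 1, by omega⟩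
      else if hx' : (t : ℕ) = i then x
      else if hy' : (t : ℕ) = j then y
      else p ⟨(t : ℕ) - 1, by have := t.isLt; omega⟩ := ⟨_, rfl⟩
  have hQ0 : ∀ t : Fin n, (t:ℕ) = 0 → Q t = p ⟨i - 1, by omega⟩ := by
    intro t h; rw [hQdef]; simp only []; rw [dif_pos h]
  have hQl : ∀ t : Fin n, (t:ℕ) = n - 1 → Q t = p ⟨j - 1, by omega⟩ := by
    intro t h; rw [hQdef]; simp only []; rw [dif_neg (by omega), dif_pos h]
  have hQi : ∀ t : Fin n, (t:ℕ) = i → Q t = x := by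
    intro t h; rw [hQdef]; simp only []; rw [dif_neg (by omega), dif_neg (by omega), dif_pos h]
  have hQj : ∀ t : Fin n, (t:ℕ) = j → Q t = y := by
    intro t h; rw [hQdef]; simp only []
    rw [dif_neg (by omega), dif_neg (by omega), dif_neg (by omega), dif_pos h]
  have hQp : ∀ t : Fin n, (t:ℕ) ≠ 0 → (t:ℕ) ≠ n - 1 → (t:ℕ) ≠ i → (t:ℕ) ≠ j →
      ∀ (k : ℕ) (hk : k < n - 2), (t:ℕ) = k + 1 → Q t = p ⟨k, hk⟩ := by
    intro t h1 h2 h3 h4 k hk hk'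
    rw [hQdef]; simp only []
    rw [dif_neg h1, dif_neg h2, dif_neg h3, dif_neg h4]
    exact hpe _ _ _ _ (by omega)
  have hval : ∀ (t : Fin n), (t:ℕ) + 1 < n → ((t + ⟨1, hone⟩ : Fin n) : ℕ) = (t:ℕ) + 1 :=
    fun t ht => Nat.mod_eq_of_lt ht
  have hval0 : ∀ (t : Fin n), (t:ℕ) = n - 1 → ((t + ⟨1, hone⟩ : Fin n) : ℕ) = 0 := by
    intro t ht
    show ((t:ℕ) + 1) % n = 0
    have h : (t:ℕ) + 1 = n := by omega
    rw [h, Nat.mod_self]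
  -- injectivity of Q
  have classify5 : ∀ v : ℕ, v = 0 ∨ v = n - 1 ∨ v = i ∨ v = j ∨
      (v ≠ 0 ∧ v ≠ n - 1 ∧ v ≠ i ∧ v ≠ j) := by intro v; omega
  have hinj : Function.Injective Q := by
    intro a b hab
    have han := a.isLt
    have hbn := b.isLt
    rcases classify5 (a:ℕ) with ha|ha|ha|ha|ha <;>
        rcases classify5 (b:ℕ) with hb|hb|hb|hb|hb
    · exact Fin.ext (by have h := hp_inj ((hQ0 a ha).symm.trans (hab.trans (hQ0 b hb))); rw [Fin.mk.injEq] at h; omega)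
    · exact Fin.ext (by have h := hp_inj ((hQ0 a ha).symm.trans (hab.trans (hQl b hb))); rw [Fin.mk.injEq] at h; omega)
    · exact absurd ⟨_, ((hQ0 a ha).symm.trans (hab.trans (hQi b hb)))⟩ hx
    · exact absurd ⟨_, ((hQ0 a ha).symm.trans (hab.trans (hQj b hb)))⟩ hy
    · exact Fin.ext (by have h := hp_inj ((hQ0 a ha).symm.trans (hab.trans (hQp b hb.1 hb.2.1 hb.2.2.1 hb.2.2.2 ((b:ℕ)-1) (by omega) (by omega)))); rw [Fin.mk.injEq] at h; omega)
    · exact Fin.ext (by have h := hp_inj ((hQl a ha).symm.trans (hab.trans (hQ0 b hb))); rw [Fin.mk.injEq] at h; omega)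
    · exact Fin.ext (by have h := hp_inj ((hQl a ha).symm.trans (hab.trans (hQl b hb))); rw [Fin.mk.injEq] at h; omega)
    · exact absurd ⟨_, ((hQl a ha).symm.trans (hab.trans (hQi b hb)))⟩ hx
    · exact absurd ⟨_, ((hQl a ha).symm.trans (hab.trans (hQj b hb)))⟩ hy
    · exact Fin.ext (by have h := hp_inj ((hQl a ha).symm.trans (hab.trans (hQp b hb.1 hb.2.1 hb.2.2.1 hb.2.2.2 ((b:ℕ)-1) (by omega) (by omega)))); rw [Fin.mk.injEq] at h; omega)
    · exact absurd ⟨_, ((hQi a ha).symm.trans (hab.trans (hQ0 b hb))).symm⟩ hx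
    · exact absurd ⟨_, ((hQi a ha).symm.trans (hab.trans (hQl b hb))).symm⟩ hx
    · exact Fin.ext (ha.trans hb.symm)
    · exact absurd ((hQi a ha).symm.trans (hab.trans (hQj b hb))) hxy
    · exact absurd ⟨_, ((hQi a ha).symm.trans (hab.trans (hQp b hb.1 hb.2.1 hb.2.2.1 hb.2.2.2 ((b:ℕ)-1) (by omega) (by omega)))).symm⟩ hx
    · exact absurd ⟨_, ((hQj a ha).symm.trans (hab.trans (hQ0 b hb))).symm⟩ hy
    · exact absurd ⟨_, ((hQj a ha).symm.trans (hab.trans (hQl b hb))).symm⟩ hy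
    · exact absurd ((hQj a ha).symm.trans (hab.trans (hQi b hb))).symm hxy
    · exact Fin.ext (ha.trans hb.symm)
    · exact absurd ⟨_, ((hQj a ha).symm.trans (hab.trans (hQp b hb.1 hb.2.1 hb.2.2.1 hb.2.2.2 ((b:ℕ)-1) (by omega) (by omega)))).symm⟩ hy
    · exact Fin.ext (by have h := hp_inj ((hQp a ha.1 ha.2.1 ha.2.2.1 ha.2.2.2 ((a:ℕ)-1) (by omega) (by omega)).symm.trans (hab.trans (hQ0 b hb))); rw [Fin.mk.injEq] at h; omega)
    · exact Fin.ext (by have h := hp_inj ((hQp a ha.1 ha.2.1 ha.2.2.1 ha.2.2.2 ((a:ℕ)-1) (by omega) (by omega)).symm.trans (hab.trans (hQl b hb))); rw [Fin.mk.injEq] at h; omega)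
    · exact absurd ⟨_, ((hQp a ha.1 ha.2.1 ha.2.2.1 ha.2.2.2 ((a:ℕ)-1) (by omega) (by omega)).symm.trans (hab.trans (hQi b hb)))⟩ hx
    · exact absurd ⟨_, ((hQp a ha.1 ha.2.1 ha.2.2.1 ha.2.2.2 ((a:ℕ)-1) (by omega) (by omega)).symm.trans (hab.trans (hQj b hb)))⟩ hy
    · exact Fin.ext (by have h := hp_inj ((hQp a ha.1 ha.2.1 ha.2.2.1 ha.2.2.2 ((a:ℕ)-1) (by omega) (by omega)).symm.trans (hab.trans (hQp b hb.1 hb.2.1 hb.2.2.1 hb.2.2.2 ((b:ℕ)-1) (by omega) (by omega)))); rw [Fin.mk.injEq] at h; omega)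
  -- adjacency
  have hadj : ∀ t : Fin n, H.Adj (Q t) (Q (t + ⟨1, hone⟩)) := by
    intro t
    clear hp_rb hp_inj hdist havoid hxy hx hy hQdef hpe classify5
    have htn := t.isLt
    by_cases h7 : (t:ℕ) = n - 1
    · have hu := hval0 t h7
      rw [hQl t h7, hQ0 _ hu]
      exact he7.symm
    · have hu := hval t (by omega)
      by_cases h0 : (t:ℕ) = 0
      · rw [hQ0 t h0, hQp _ (by omega) (by omega) (by omega) (by omega) 0 (by omega) (by omega)]
        exact he1
      · by_cases hA : (t:ℕ) = i - 1
        · rw [hQp t h0 (by omega) (by omega) (by omega) (i-2) (by omega) (by omega),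
              hQi _ (by omega)]
          exact he2
        · by_cases hB : (t:ℕ) = i
          · rw [hQi t hB, hQp _ (by omega) (by omega) (by omega) (by omega) i (by omega) (by omega)]
            exact he3.symm
          · by_cases hC : (t:ℕ) = j - 1
            · rw [hQp t h0 (by omega) (by omega) (by omega) (j-2) (by omega) (by omega),
                  hQj _ (by omega)]
              exact he5
            · by_cases hD : (t:ℕ) = j
              · rw [hQj t hD,
                    hQp _ (by omega) (by omega) (by omega) (by omega) j (by omega) (by omega)]
                exact he6.symm
              · by_cases hE : (t:ℕ) = n - 2
                · rw [hQp t h0 (by omega) (by omega) (by omega) (n-3) (by omega) (by omega),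
                      hQl _ (by omega)]
                  exact he4.symm
                · rw [hQp t h0 (by omega) (by omega) (by omega) ((t:ℕ)-1) (by omega) (by omega),
                      hQp _ (by omega) (by omega) (by omega) (by omega) ((t:ℕ)-1+1)
                        (by omega) (by omega)]
                  exact hp_adj ((t:ℕ)-1) (by omega)
  -- colour characterisation
  have K0 : ∀ t : Fin n, (t:ℕ) = 0 →
      ψ s(Q t, Q (t + ⟨1, hone⟩)) = ψ s(p ⟨0, by omega⟩, p ⟨i - 1, by omega⟩) := by
    intro t ht
    have htn := t.isLt
    have hu := hval t (by omega)
    rw [hQ0 t ht, hQp _ (by omega) (by omega) (by omega) (by omega) 0 (by omega) (by omega)]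
    exact congrArg ψ Sym2.eq_swap
  have Ki1 : ∀ t : Fin n, (t:ℕ) = i - 1 →
      ψ s(Q t, Q (t + ⟨1, hone⟩)) = ψ s(x, p ⟨i - 2, by omega⟩) := by
    intro t ht
    have htn := t.isLt
    have hu := hval t (by omega)
    rw [hQp t (by omega) (by omega) (by omega) (by omega) (i-2) (by omega) (by omega),
        hQi _ (by omega)]
    exact congrArg ψ Sym2.eq_swap
  have Ki : ∀ t : Fin n, (t:ℕ) = i →
      ψ s(Q t, Q (t + ⟨1, hone⟩)) = ψ s(x, p ⟨i, by omega⟩) := by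
    intro t ht
    have htn := t.isLt
    have hu := hval t (by omega)
    rw [hQi t ht, hQp _ (by omega) (by omega) (by omega) (by omega) i (by omega) (by omega)]
  have Kj1 : ∀ t : Fin n, (t:ℕ) = j - 1 →
      ψ s(Q t, Q (t + ⟨1, hone⟩)) = ψ s(y, p ⟨j - 2, by omega⟩) := by
    intro t ht
    have htn := t.isLt
    have hu := hval t (by omega)
    rw [hQp t (by omega) (by omega) (by omega) (by omega) (j-2) (by omega) (by omega),
        hQj _ (by omega)]
    exact congrArg ψ Sym2.eq_swap
  have Kj : ∀ t : Fin n, (t:ℕ) = j →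
      ψ s(Q t, Q (t + ⟨1, hone⟩)) = ψ s(y, p ⟨j, by omega⟩) := by
    intro t ht
    have htn := t.isLt
    have hu := hval t (by omega)
    rw [hQj t ht, hQp _ (by omega) (by omega) (by omega) (by omega) j (by omega) (by omega)]
  have Kn2 : ∀ t : Fin n, (t:ℕ) = n - 2 →
      ψ s(Q t, Q (t + ⟨1, hone⟩)) = ψ s(p ⟨n - 3, by omega⟩, p ⟨j - 1, by omega⟩) := by
    intro t ht
    have htn := t.isLt
    have hu := hval t (by omega)
    rw [hQp t (by omega) (by omega) (by omega) (by omega) (n-3) (by omega) (by omega),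
        hQl _ (by omega)]
  have Kn1 : ∀ t : Fin n, (t:ℕ) = n - 1 →
      ψ s(Q t, Q (t + ⟨1, hone⟩)) = ψ s(p ⟨i - 1, by omega⟩, p ⟨j - 1, by omega⟩) := by
    intro t ht
    have hu := hval0 t ht
    rw [hQl t ht, hQ0 _ hu]
    exact congrArg ψ Sym2.eq_swap
  have Kpath : ∀ t : Fin n, (ht0 : (t:ℕ) ≠ 0) → (hti1 : (t:ℕ) ≠ i - 1) → (hti : (t:ℕ) ≠ i) →
      (htj1 : (t:ℕ) ≠ j - 1) → (htj : (t:ℕ) ≠ j) → (htn2 : (t:ℕ) ≠ n - 2) →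
      (htn1 : (t:ℕ) ≠ n - 1) →
      ψ s(Q t, Q (t + ⟨1, hone⟩)) =
        ψ s(p ⟨(t:ℕ) - 1, by have := t.isLt; omega⟩,
            p ⟨(t:ℕ) - 1 + 1, by have := t.isLt; omega⟩) := by
    intro t ht0 hti1 hti htj1 htj htn2 htn1
    have htn := t.isLt
    have hu := hval t (by omega)
    rw [hQp t ht0 htn1 hti htj ((t:ℕ)-1) (by omega) (by omega),
        hQp _ (by omega) (by omega) (by omega) (by omega) ((t:ℕ)-1+1) (by omega) (by omega)]
  have harr : ∀ v : ℕ, v < n → v ≠ 0 → v ≠ i - 1 → v ≠ i → v ≠ j - 1 → v ≠ j →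
      v ≠ n - 2 → v ≠ n - 1 → v - 1 + 1 < n - 2 := by
    intro v h1 h2 h3 h4 h5 h6 h7 h8; omega
  have harr2 : ∀ u v : ℕ, u ≠ 0 → v ≠ 0 → u - 1 = v - 1 → u = v := by
    intro u v h1 h2 h3; omega
  -- nodup facts
  simp only [List.nodup_cons, List.mem_cons, List.mem_singleton, not_or,
    List.not_mem_nil, List.nodup_nil, and_true, not_false_eq_true, true_and] at hdist
  obtain ⟨⟨h12, h13, h14, h15, h16, h17⟩, ⟨h23, h24, h25, h26, h27⟩,
    ⟨h34, h35, h36, h37⟩, ⟨h45, h46, h47⟩, ⟨h56, h57⟩, h67⟩ := hdist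
  simp only [List.mem_cons, List.mem_singleton, not_or, List.not_mem_nil,
    or_false] at havoid
  have classify8 : ∀ v : ℕ, v = 0 ∨ v = i - 1 ∨ v = i ∨ v = j - 1 ∨ v = j ∨ v = n - 2 ∨
      v = n - 1 ∨ (v ≠ 0 ∧ v ≠ i - 1 ∧ v ≠ i ∧ v ≠ j - 1 ∧ v ≠ j ∧ v ≠ n - 2 ∧ v ≠ n - 1) := by
    intro v; omega
  have hrb : Function.Injective (fun t : Fin n => ψ s(Q t, Q (t + ⟨1, hone⟩))) := by
    intro a b hab
    have hab : ψ s(Q a, Q (a + ⟨1, hone⟩)) = ψ s(Q b, Q (b + ⟨1, hone⟩)) := hab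
    have han := a.isLt
    have hbn := b.isLt
    rcases classify8 (a:ℕ) with ha|ha|ha|ha|ha|ha|ha|ha <;>
        rcases classify8 (b:ℕ) with hb|hb|hb|hb|hb|hb|hb|hb
    · exact Fin.ext (ha.trans hb.symm)
    · exact absurd ((K0 a ha).symm.trans (hab.trans (Ki1 b hb))) h23
    · exact absurd ((K0 a ha).symm.trans (hab.trans (Ki b hb))) h24
    · exact absurd ((K0 a ha).symm.trans (hab.trans (Kj1 b hb))) h26
    · exact absurd ((K0 a ha).symm.trans (hab.trans (Kj b hb))) h27
    · exact absurd ((K0 a ha).symm.trans (hab.trans (Kn2 b hb))) h25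
    · exact absurd ((K0 a ha).symm.trans (hab.trans (Kn1 b hb))) (Ne.symm h12)
    · exact absurd ((K0 a ha).symm.trans (hab.trans (Kpath b hb.1 hb.2.1 hb.2.2.1 hb.2.2.2.1 hb.2.2.2.2.1 hb.2.2.2.2.2.1 hb.2.2.2.2.2.2))).symm ((havoid ((b:ℕ)-1) (harr _ hbn hb.1 hb.2.1 hb.2.2.1 hb.2.2.2.1 hb.2.2.2.2.1 hb.2.2.2.2.2.1 hb.2.2.2.2.2.2)).2.1)
    · exact absurd ((Ki1 a ha).symm.trans (hab.trans (K0 b hb))) (Ne.symm h23)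
    · exact Fin.ext (ha.trans hb.symm)
    · exact absurd ((Ki1 a ha).symm.trans (hab.trans (Ki b hb))) h34
    · exact absurd ((Ki1 a ha).symm.trans (hab.trans (Kj1 b hb))) h36
    · exact absurd ((Ki1 a ha).symm.trans (hab.trans (Kj b hb))) h37
    · exact absurd ((Ki1 a ha).symm.trans (hab.trans (Kn2 b hb))) h35
    · exact absurd ((Ki1 a ha).symm.trans (hab.trans (Kn1 b hb))) (Ne.symm h13)
    · exact absurd ((Ki1 a ha).symm.trans (hab.trans (Kpath b hb.1 hb.2.1 hb.2.2.1 hb.2.2.2.1 hb.2.2.2.2.1 hb.2.2.2.2.2.1 hb.2.2.2.2.2.2))).symm ((havoid ((b:ℕ)-1) (harr _ hbn hb.1 hb.2.1 hb.2.2.1 hb.2.2.2.1 hb.2.2.2.2.1 hb.2.2.2.2.2.1 hb.2.2.2.2.2.2)).2.2.1)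
    · exact absurd ((Ki a ha).symm.trans (hab.trans (K0 b hb))) (Ne.symm h24)
    · exact absurd ((Ki a ha).symm.trans (hab.trans (Ki1 b hb))) (Ne.symm h34)
    · exact Fin.ext (ha.trans hb.symm)
    · exact absurd ((Ki a ha).symm.trans (hab.trans (Kj1 b hb))) h46
    · exact absurd ((Ki a ha).symm.trans (hab.trans (Kj b hb))) h47
    · exact absurd ((Ki a ha).symm.trans (hab.trans (Kn2 b hb))) h45
    · exact absurd ((Ki a ha).symm.trans (hab.trans (Kn1 b hb))) (Ne.symm h14)
    · exact absurd ((Ki a ha).symm.trans (hab.trans (Kpath b hb.1 hb.2.1 hb.2.2.1 hb.2.2.2.1 hb.2.2.2.2.1 hb.2.2.2.2.2.1 hb.2.2.2.2.2.2))).symm ((havoid ((b:ℕ)-1) (harr _ hbn hb.1 hb.2.1 hb.2.2.1 hb.2.2.2.1 hb.2.2.2.2.1 hb.2.2.2.2.2.1 hb.2.2.2.2.2.2)).2.2.2.1)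
    · exact absurd ((Kj1 a ha).symm.trans (hab.trans (K0 b hb))) (Ne.symm h26)
    · exact absurd ((Kj1 a ha).symm.trans (hab.trans (Ki1 b hb))) (Ne.symm h36)
    · exact absurd ((Kj1 a ha).symm.trans (hab.trans (Ki b hb))) (Ne.symm h46)
    · exact Fin.ext (ha.trans hb.symm)
    · exact absurd ((Kj1 a ha).symm.trans (hab.trans (Kj b hb))) h67
    · exact absurd ((Kj1 a ha).symm.trans (hab.trans (Kn2 b hb))) (Ne.symm h56)
    · exact absurd ((Kj1 a ha).symm.trans (hab.trans (Kn1 b hb))) (Ne.symm h16)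
    · exact absurd ((Kj1 a ha).symm.trans (hab.trans (Kpath b hb.1 hb.2.1 hb.2.2.1 hb.2.2.2.1 hb.2.2.2.2.1 hb.2.2.2.2.2.1 hb.2.2.2.2.2.2))).symm ((havoid ((b:ℕ)-1) (harr _ hbn hb.1 hb.2.1 hb.2.2.1 hb.2.2.2.1 hb.2.2.2.2.1 hb.2.2.2.2.2.1 hb.2.2.2.2.2.2)).2.2.2.2.2.1)
    · exact absurd ((Kj a ha).symm.trans (hab.trans (K0 b hb))) (Ne.symm h27)
    · exact absurd ((Kj a ha).symm.trans (hab.trans (Ki1 b hb))) (Ne.symm h37)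
    · exact absurd ((Kj a ha).symm.trans (hab.trans (Ki b hb))) (Ne.symm h47)
    · exact absurd ((Kj a ha).symm.trans (hab.trans (Kj1 b hb))) (Ne.symm h67)
    · exact Fin.ext (ha.trans hb.symm)
    · exact absurd ((Kj a ha).symm.trans (hab.trans (Kn2 b hb))) (Ne.symm h57)
    · exact absurd ((Kj a ha).symm.trans (hab.trans (Kn1 b hb))) (Ne.symm h17)
    · exact absurd ((Kj a ha).symm.trans (hab.trans (Kpath b hb.1 hb.2.1 hb.2.2.1 hb.2.2.2.1 hb.2.2.2.2.1 hb.2.2.2.2.2.1 hb.2.2.2.2.2.2))).symm ((havoid ((b:ℕ)-1) (harr _ hbn hb.1 hb.2.1 hb.2.2.1 hb.2.2.2.1 hb.2.2.2.2.1 hb.2.2.2.2.2.1 hb.2.2.2.2.2.2)).2.2.2.2.2.2)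
    · exact absurd ((Kn2 a ha).symm.trans (hab.trans (K0 b hb))) (Ne.symm h25)
    · exact absurd ((Kn2 a ha).symm.trans (hab.trans (Ki1 b hb))) (Ne.symm h35)
    · exact absurd ((Kn2 a ha).symm.trans (hab.trans (Ki b hb))) (Ne.symm h45)
    · exact absurd ((Kn2 a ha).symm.trans (hab.trans (Kj1 b hb))) h56
    · exact absurd ((Kn2 a ha).symm.trans (hab.trans (Kj b hb))) h57
    · exact Fin.ext (ha.trans hb.symm)
    · exact absurd ((Kn2 a ha).symm.trans (hab.trans (Kn1 b hb))) (Ne.symm h15)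
    · exact absurd ((Kn2 a ha).symm.trans (hab.trans (Kpath b hb.1 hb.2.1 hb.2.2.1 hb.2.2.2.1 hb.2.2.2.2.1 hb.2.2.2.2.2.1 hb.2.2.2.2.2.2))).symm ((havoid ((b:ℕ)-1) (harr _ hbn hb.1 hb.2.1 hb.2.2.1 hb.2.2.2.1 hb.2.2.2.2.1 hb.2.2.2.2.2.1 hb.2.2.2.2.2.2)).2.2.2.2.1)
    · exact absurd ((Kn1 a ha).symm.trans (hab.trans (K0 b hb))) h12
    · exact absurd ((Kn1 a ha).symm.trans (hab.trans (Ki1 b hb))) h13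
    · exact absurd ((Kn1 a ha).symm.trans (hab.trans (Ki b hb))) h14
    · exact absurd ((Kn1 a ha).symm.trans (hab.trans (Kj1 b hb))) h16
    · exact absurd ((Kn1 a ha).symm.trans (hab.trans (Kj b hb))) h17
    · exact absurd ((Kn1 a ha).symm.trans (hab.trans (Kn2 b hb))) h15
    · exact Fin.ext (ha.trans hb.symm)
    · exact absurd ((Kn1 a ha).symm.trans (hab.trans (Kpath b hb.1 hb.2.1 hb.2.2.1 hb.2.2.2.1 hb.2.2.2.2.1 hb.2.2.2.2.2.1 hb.2.2.2.2.2.2))).symm ((havoid ((b:ℕ)-1) (harr _ hbn hb.1 hb.2.1 hb.2.2.1 hb.2.2.2.1 hb.2.2.2.2.1 hb.2.2.2.2.2.1 hb.2.2.2.2.2.2)).1)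
    · exact absurd ((Kpath a ha.1 ha.2.1 ha.2.2.1 ha.2.2.2.1 ha.2.2.2.2.1 ha.2.2.2.2.2.1 ha.2.2.2.2.2.2).symm.trans (hab.trans (K0 b hb))) ((havoid ((a:ℕ)-1) (harr _ han ha.1 ha.2.1 ha.2.2.1 ha.2.2.2.1 ha.2.2.2.2.1 ha.2.2.2.2.2.1 ha.2.2.2.2.2.2)).2.1)
    · exact absurd ((Kpath a ha.1 ha.2.1 ha.2.2.1 ha.2.2.2.1 ha.2.2.2.2.1 ha.2.2.2.2.2.1 ha.2.2.2.2.2.2).symm.trans (hab.trans (Ki1 b hb))) ((havoid ((a:ℕ)-1) (harr _ han ha.1 ha.2.1 ha.2.2.1 ha.2.2.2.1 ha.2.2.2.2.1 ha.2.2.2.2.2.1 ha.2.2.2.2.2.2)).2.2.1)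
    · exact absurd ((Kpath a ha.1 ha.2.1 ha.2.2.1 ha.2.2.2.1 ha.2.2.2.2.1 ha.2.2.2.2.2.1 ha.2.2.2.2.2.2).symm.trans (hab.trans (Ki b hb))) ((havoid ((a:ℕ)-1) (harr _ han ha.1 ha.2.1 ha.2.2.1 ha.2.2.2.1 ha.2.2.2.2.1 ha.2.2.2.2.2.1 ha.2.2.2.2.2.2)).2.2.2.1)
    · exact absurd ((Kpath a ha.1 ha.2.1 ha.2.2.1 ha.2.2.2.1 ha.2.2.2.2.1 ha.2.2.2.2.2.1 ha.2.2.2.2.2.2).symm.trans (hab.trans (Kj1 b hb))) ((havoid ((a:ℕ)-1) (harr _ han ha.1 ha.2.1 ha.2.2.1 ha.2.2.2.1 ha.2.2.2.2.1 ha.2.2.2.2.2.1 ha.2.2.2.2.2.2)).2.2.2.2.2.1)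
    · exact absurd ((Kpath a ha.1 ha.2.1 ha.2.2.1 ha.2.2.2.1 ha.2.2.2.2.1 ha.2.2.2.2.2.1 ha.2.2.2.2.2.2).symm.trans (hab.trans (Kj b hb))) ((havoid ((a:ℕ)-1) (harr _ han ha.1 ha.2.1 ha.2.2.1 ha.2.2.2.1 ha.2.2.2.2.1 ha.2.2.2.2.2.1 ha.2.2.2.2.2.2)).2.2.2.2.2.2)
    · exact absurd ((Kpath a ha.1 ha.2.1 ha.2.2.1 ha.2.2.2.1 ha.2.2.2.2.1 ha.2.2.2.2.2.1 ha.2.2.2.2.2.2).symm.trans (hab.trans (Kn2 b hb))) ((havoid ((a:ℕ)-1) (harr _ han ha.1 ha.2.1 ha.2.2.1 ha.2.2.2.1 ha.2.2.2.2.1 ha.2.2.2.2.2.1 ha.2.2.2.2.2.2)).2.2.2.2.1)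
    · exact absurd ((Kpath a ha.1 ha.2.1 ha.2.2.1 ha.2.2.2.1 ha.2.2.2.2.1 ha.2.2.2.2.2.1 ha.2.2.2.2.2.2).symm.trans (hab.trans (Kn1 b hb))) ((havoid ((a:ℕ)-1) (harr _ han ha.1 ha.2.1 ha.2.2.1 ha.2.2.2.1 ha.2.2.2.2.1 ha.2.2.2.2.2.1 ha.2.2.2.2.2.2)).1)
    · exact Fin.ext (harr2 _ _ ha.1 hb.1 (hp_rb ((a:ℕ)-1) ((b:ℕ)-1) (harr _ han ha.1 ha.2.1 ha.2.2.1 ha.2.2.2.1 ha.2.2.2.2.1 ha.2.2.2.2.2.1 ha.2.2.2.2.2.2) (harr _ hbn hb.1 hb.2.1 hb.2.2.1 hb.2.2.2.1 hb.2.2.2.2.1 hb.2.2.2.2.2.1 hb.2.2.2.2.2.2) ((Kpath a ha.1 ha.2.1 ha.2.2.1 ha.2.2.2.1 ha.2.2.2.2.1 ha.2.2.2.2.2.1 ha.2.2.2.2.2.2).symm.trans (hab.trans (Kpath b hb.1 hb.2.1 hb.2.2.1 hb.2.2.2.1 hb.2.2.2.2.1 hb.2.2.2.2.2.1 hb.2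.2.2.2.2.2)))))
  exact ⟨Q, hQdef, Finite.injective_iff_bijective.mp hinj, hadj, hrb⟩
end
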